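/- arXiv:math/0207296 — 6 statements merged into one kernel-verified Lean document; each statement's English description precedes it below -/
import Mathlib

section
/- Let (X,d) be a δ-hyperbolic geodesic metric space. Then for every z ∈ X and every arclength-parameterized geodesic segment γ : [0,ℓ] → X, the function t ↦ d(z,γ(t)) on [0,ℓ] is a 4δ-T-function. -/
open Set Metric Filter
open scoped ENNReal NNReal

/-- `γ`, restricted to `[0, dist x y]`, is a unit-speed (arclength-parameterized) geodesic
segment from `x` to `y`. -/
def IsGeodSegment {X : Type*} [MetricSpace X] (γ : ℝ → X) (x y : X) : Prop :=
  γ 0 = x ∧ γ (dist x y) = y ∧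
    ∀ s ∈ Set.Icc (0 : ℝ) (dist x y), ∀ t ∈ Set.Icc (0 : ℝ) (dist x y),
      dist (γ s) (γ t) = |s - t|

/-- A metric space is geodesic if any two points are joined by a geodesic segment. -/
def GeodesicMS (X : Type*) [MetricSpace X] : Prop :=
  ∀ x y : X, ∃ γ : ℝ → X, IsGeodSegment γ x y

/-- The image (side) of a geodesic segment from `x` to `y`. -/
def segImg {X : Type*} [MetricSpace X] (γ : ℝ → X) (x y : X) : Set X :=
  γ '' Set.Icc 0 (dist x y)

/-- `X` is `δ`-hyperbolic: each side of each geodesic triangle is contained in the closed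
`δ`-neighborhood of the union of the two other sides.  (Since the vertices `x y z` and the
three sides are universally quantified, the condition for the single side `γ_{xy}` implies
it for all three sides.) -/
def DeltaHyp (X : Type*) [MetricSpace X] (δ : ℝ) : Prop :=
  ∀ (x y z : X) (gxy gxz gyz : ℝ → X),
    IsGeodSegment gxy x y → IsGeodSegment gxz x z → IsGeodSegment gyz y z →
      ∀ s ∈ Set.Icc (0 : ℝ) (dist x y),
        ∃ w ∈ segImg gxz x z ∪ segImg gyz y z, dist (gxy s) w ≤ δ

/-- `X` is hyperbolic if it is `δ`-hyperbolic for some `δ ≥ 0`. -/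
def GromovHyperbolic (X : Type*) [MetricSpace X] : Prop :=
  ∃ δ : ℝ, 0 ≤ δ ∧ DeltaHyp X δ

/-- The Gromov product `(y⬝z)_x`. -/
noncomputable def gp {X : Type*} [MetricSpace X] (y z x : X) : ℝ :=
  (dist y x + dist z x - dist y z) / 2

/-- A geodesic ray (unit-speed, defined on `[0,∞)`). -/
def IsRay {X : Type*} [MetricSpace X] (γ : ℝ → X) : Prop :=
  ∀ s ∈ Set.Ici (0 : ℝ), ∀ t ∈ Set.Ici (0 : ℝ), dist (γ s) (γ t) = |s - t|

/-- `B` is the Busemann function associated to some geodesic ray. -/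
def IsBusemann {X : Type*} [MetricSpace X] (B : X → ℝ) : Prop :=
  ∃ γ : ℝ → X, IsRay γ ∧
    ∀ x : X, Filter.Tendsto (fun t => dist x (γ t) - t) Filter.atTop (nhds (B x))

/-- `γ` is a `B`-ray: a geodesic ray along which `B` decreases with unit speed. -/
def IsBRay {X : Type*} [MetricSpace X] (B : X → ℝ) (γ : ℝ → X) : Prop :=
  IsRay γ ∧ ∀ t ∈ Set.Ici (0 : ℝ), B (γ t) = B (γ 0) - t

/-- A `T`-function on `[α,ω]`: `f t = |t - m| + k` for some `m ∈ [α,ω]` and `k ∈ ℝ`. -/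
def IsTFun (f : ℝ → ℝ) (α ω : ℝ) : Prop :=
  ∃ m ∈ Set.Icc α ω, ∃ k : ℝ, ∀ t ∈ Set.Icc α ω, f t = |t - m| + k

/-- A `δ`-`T`-function on `[α,ω]`: uniformly `δ`-close to a `T`-function. -/
def IsDeltaTFun (δ : ℝ) (f : ℝ → ℝ) (α ω : ℝ) : Prop :=
  ∃ g : ℝ → ℝ, IsTFun g α ω ∧ ∀ t ∈ Set.Icc α ω, |f t - g t| ≤ δ

/-- The interior (induced length) metric associated to the metric of `Z`: the infimum of
lengths (total variations) of continuous paths joining the two points, with value in `ℝ≥0∞`. -/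
noncomputable def intDist {Z : Type*} [MetricSpace Z] (p q : Z) : ℝ≥0∞ :=
  ⨅ (c : ℝ → Z) (_ : ContinuousOn c (Set.Icc 0 1)) (_ : c 0 = p) (_ : c 1 = q),
    eVariationOn c (Set.Icc (0 : ℝ) 1)

/-- The "Gromov product with a Busemann function": `(x'⬝B)_x = ½(d(x,x') + B(x) - B(x'))`. -/
noncomputable def gpB {X : Type*} [MetricSpace X] (B : X → ℝ) (x x' : X) : ℝ :=
  (dist x x' + B x - B x') / 2

/-- Unit-speed geodesic segment with respect to a bare distance function `D`. -/
def IsGeodSegmentD {Z : Type*} (D : Z → Z → ℝ) (γ : ℝ → Z) (x y : Z) : Prop :=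
  γ 0 = x ∧ γ (D x y) = y ∧
    ∀ s ∈ Set.Icc (0 : ℝ) (D x y), ∀ t ∈ Set.Icc (0 : ℝ) (D x y), D (γ s) (γ t) = |s - t|

/-- `δ`-hyperbolicity with respect to a bare distance function `D`. -/
def DeltaHypD {Z : Type*} (D : Z → Z → ℝ) (δ : ℝ) : Prop :=
  ∀ (x y z : Z) (gxy gxz gyz : ℝ → Z),
    IsGeodSegmentD D gxy x y → IsGeodSegmentD D gxz x z → IsGeodSegmentD D gyz y z →
      ∀ s ∈ Set.Icc (0 : ℝ) (D x y),
        ∃ w ∈ (gxz '' Set.Icc 0 (D x z)) ∪ (gyz '' Set.Icc 0 (D y z)), D (gxy s) w ≤ δ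
private lemma geod_contOn {X : Type*} [MetricSpace X] {γ : ℝ → X} {A : Set ℝ}
    (h : ∀ s ∈ A, ∀ t ∈ A, dist (γ s) (γ t) = |s - t|) : ContinuousOn γ A := by
  have : LipschitzOnWith 1 γ A := by
    apply LipschitzOnWith.of_dist_le_mul
    intro x hx y hy
    rw [h x hx y hy, Real.dist_eq]
    simp
  exact this.continuousOn

private lemma key_lemma {X : Type*} [MetricSpace X] {δ : ℝ} (hδ : 0 ≤ δ)
    (hgeo : GeodesicMS X) (hhyp : DeltaHyp X δ) (z : X) (γ : ℝ → X) {ℓ u v : ℝ}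
    (hu : 0 ≤ u) (huv : u ≤ v) (hv : v ≤ ℓ)
    (hγ : ∀ s ∈ Set.Icc (0 : ℝ) ℓ, ∀ t ∈ Set.Icc (0 : ℝ) ℓ, dist (γ s) (γ t) = |s - t|)
    (hmin : ∀ s ∈ Set.Icc u v, dist z (γ u) ≤ dist z (γ s)) :
    dist z (γ u) + (v - u) - 4 * δ ≤ dist z (γ v) := by
  have huℓ : u ∈ Set.Icc (0:ℝ) ℓ := ⟨hu, le_trans huv hv⟩
  have hvℓ : v ∈ Set.Icc (0:ℝ) ℓ := ⟨le_trans hu huv, hv⟩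
  obtain ⟨gaz, hgaz⟩ := hgeo (γ u) z
  obtain ⟨gbz, hgbz⟩ := hgeo (γ v) z
  have hab : dist (γ u) (γ v) = v - u := by
    rw [hγ u huℓ v hvℓ, abs_sub_comm, abs_of_nonneg (by linarith)]
  -- the side from γ u to γ v
  set g : ℝ → X := fun s => γ (u + s) with hgdef
  have hmem : ∀ s ∈ Set.Icc (0:ℝ) (v - u), u + s ∈ Set.Icc (0:ℝ) ℓ := by
    intro s hs; exact ⟨by linarith [hs.1], by linarith [hs.2]⟩
  have hg : IsGeodSegment g (γ u) (γ v) := by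
    refine ⟨by simp [hgdef], ?_, ?_⟩
    · rw [hab]; show γ (u + (v - u)) = γ v; congr 1; ring
    · intro s hs t ht
      rw [hab] at hs ht
      rw [hγ (u + s) (hmem s hs) (u + t) (hmem t ht)]
      congr 1; ring
  have hthin : ∀ s ∈ Set.Icc u v,
      ∃ w ∈ segImg gaz (γ u) z ∪ segImg gbz (γ v) z, dist (γ s) w ≤ δ := by
    intro s hs
    obtain ⟨w, hw, hd⟩ := hhyp (γ u) (γ v) z g gaz gbz hg hgaz hgbz (s - u)
      (by rw [hab]; exact ⟨by linarith [hs.1], by linarith [hs.2]⟩)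
    refine ⟨w, hw, ?_⟩
    have : g (s - u) = γ s := by show γ (u + (s - u)) = γ s; congr 1; ring
    rwa [this] at hd
  -- compactness of the two sides
  have hKc : ∀ (a : X) (gaz' : ℝ → X), IsGeodSegment gaz' a z →
      IsCompact (segImg gaz' a z) := by
    intro a gaz' h
    exact isCompact_Icc.image_of_continuousOn (geod_contOn h.2.2)
  have hK1c := hKc _ _ hgaz
  have hK2c := hKc _ _ hgbz
  have hK1ne : (segImg gaz (γ u) z).Nonempty :=
    ⟨gaz 0, Set.mem_image_of_mem _ (Set.left_mem_Icc.2 dist_nonneg)⟩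
  have hK2ne : (segImg gbz (γ v) z).Nonempty :=
    ⟨gbz 0, Set.mem_image_of_mem _ (Set.left_mem_Icc.2 dist_nonneg)⟩
  -- connectedness argument
  set C1 : Set ℝ := Set.Icc u v ∩ γ ⁻¹' {x | Metric.infDist x (segImg gaz (γ u) z) ≤ δ}
    with hC1def
  set C2 : Set ℝ := Set.Icc u v ∩ γ ⁻¹' {x | Metric.infDist x (segImg gbz (γ v) z) ≤ δ}
    with hC2def
  have hγcont : ContinuousOn γ (Set.Icc u v) :=
    (geod_contOn hγ).mono (Set.Icc_subset_Icc huℓ.1 hvℓ.2)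
  have hC1closed : IsClosed C1 :=
    hγcont.preimage_isClosed_of_isClosed isClosed_Icc
      (isClosed_le (Metric.continuous_infDist_pt _) continuous_const)
  have hC2closed : IsClosed C2 :=
    hγcont.preimage_isClosed_of_isClosed isClosed_Icc
      (isClosed_le (Metric.continuous_infDist_pt _) continuous_const)
  have hcover : Set.Icc u v ⊆ C1 ∪ C2 := by
    intro s hs
    obtain ⟨w, hw, hd⟩ := hthin s hs
    cases hw with
    | inl hw => exact Or.inl ⟨hs, le_trans (Metric.infDist_le_dist_of_mem hw) hd⟩
    | inr hw => exact Or.inr ⟨hs, le_trans (Metric.infDist_le_dist_of_mem hw) hd⟩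
  have huC1 : u ∈ C1 := by
    refine ⟨Set.left_mem_Icc.2 huv, ?_⟩
    have : γ u ∈ segImg gaz (γ u) z := by
      rw [← hgaz.1]; exact Set.mem_image_of_mem _ (Set.left_mem_Icc.2 dist_nonneg)
    exact le_trans (le_of_eq (Metric.infDist_zero_of_mem this)) hδ
  have hvC2 : v ∈ C2 := by
    refine ⟨Set.right_mem_Icc.2 huv, ?_⟩
    have : γ v ∈ segImg gbz (γ v) z := by
      rw [← hgbz.1]; exact Set.mem_image_of_mem _ (Set.left_mem_Icc.2 dist_nonneg)
    exact le_trans (le_of_eq (Metric.infDist_zero_of_mem this)) hδ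
  obtain ⟨s0, hs0Icc, hs0⟩ :=
    (isPreconnected_closed_iff.mp isPreconnected_Icc) C1 C2 hC1closed hC2closed
      hcover ⟨u, Set.left_mem_Icc.2 huv, huC1⟩ ⟨v, Set.right_mem_Icc.2 huv, hvC2⟩
  obtain ⟨w1, hw1K, hw1d⟩ := hK1c.exists_infDist_eq_dist hK1ne (γ s0)
  obtain ⟨w2, hw2K, hw2d⟩ := hK2c.exists_infDist_eq_dist hK2ne (γ s0)
  have hd1 : dist (γ s0) w1 ≤ δ := by rw [← hw1d]; exact hs0.1.2
  have hd2 : dist (γ s0) w2 ≤ δ := by rw [← hw2d]; exact hs0.2.2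
  -- facts about w1 on [γ u, z]
  obtain ⟨r1, hr1, rfl⟩ := hw1K
  obtain ⟨r2, hr2, rfl⟩ := hw2K
  have haw1 : dist (γ u) (gaz r1) = r1 := by
    rw [← hgaz.1]
    rw [hgaz.2.2 0 (Set.left_mem_Icc.2 dist_nonneg) r1 hr1]
    rw [abs_sub_comm, sub_zero, abs_of_nonneg hr1.1]
  have hw1z : dist (gaz r1) z = dist (γ u) z - r1 := by
    conv_lhs => rw [← hgaz.2.1]
    rw [hgaz.2.2 r1 hr1 _ (Set.right_mem_Icc.2 dist_nonneg),
      abs_of_nonpos (by linarith [hr1.2])]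
    ring
  have hbw2 : dist (γ v) (gbz r2) = r2 := by
    rw [← hgbz.1]
    rw [hgbz.2.2 0 (Set.left_mem_Icc.2 dist_nonneg) r2 hr2]
    rw [abs_sub_comm, sub_zero, abs_of_nonneg hr2.1]
  have hw2z : dist (gbz r2) z = dist (γ v) z - r2 := by
    conv_lhs => rw [← hgbz.2.1]
    rw [hgbz.2.2 r2 hr2 _ (Set.right_mem_Icc.2 dist_nonneg),
      abs_of_nonpos (by linarith [hr2.2])]
    ring
  -- distances along γ
  have hus0 : dist (γ u) (γ s0) = s0 - u := by
    rw [hγ u huℓ s0 ⟨by linarith [hs0Icc.1], by linarith [hs0Icc.2]⟩,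
      abs_sub_comm, abs_of_nonneg (by linarith [hs0Icc.1])]
  have hs0v : dist (γ s0) (γ v) = v - s0 := by
    rw [hγ s0 ⟨by linarith [hs0Icc.1], by linarith [hs0Icc.2]⟩ v hvℓ,
      abs_of_nonpos (by linarith [hs0Icc.2])]
    ring
  have hmin0 : dist z (γ u) ≤ dist z (γ s0) := hmin s0 hs0Icc
  -- triangle inequalities
  have t1 : dist (γ u) (gaz r1) ≥ dist (γ u) (γ s0) - dist (γ s0) (gaz r1) := by
    have h1 := dist_triangle (γ u) (gaz r1) (γ s0)
    have h2 : dist (gaz r1) (γ s0) = dist (γ s0) (gaz r1) := dist_comm _ _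
    linarith
  have t2 : dist (gaz r1) z ≥ dist (γ s0) z - dist (γ s0) (gaz r1) := by
    have := dist_triangle (γ s0) (gaz r1) z; linarith
  have t3 : dist (gbz r2) z ≥ dist (γ s0) z - dist (γ s0) (gbz r2) := by
    have h1 := dist_triangle (γ s0) (gbz r2) z; linarith
  have t4 : dist (γ v) (gbz r2) ≥ dist (γ s0) (γ v) - dist (γ s0) (gbz r2) := by
    have h1 := dist_triangle (γ s0) (gbz r2) (γ v)
    have h2 : dist (gbz r2) (γ v) = dist (γ v) (gbz r2) := dist_comm _ _
    linarith
  have hc1 : dist z (γ u) = dist (γ u) z := dist_comm _ _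
  have hc2 : dist z (γ v) = dist (γ v) z := dist_comm _ _
  have hc3 : dist z (γ s0) = dist (γ s0) z := dist_comm _ _
  -- s0 - u ≤ 2δ
  have hkey : s0 - u ≤ 2 * δ := by
    have := t2; linarith [t1, hw1z, haw1, hus0, hmin0]
  -- conclude
  have hfinal : dist (γ v) z = dist (γ v) (gbz r2) + dist (gbz r2) z := by
    rw [hbw2, hw2z]; ring
  linarith [t3, t4, hs0v, hmin0, hfinal]

/-- Lemma 2, "⟹": In a `δ`-hyperbolic geodesic metric space, for every `z ∈ X` and every
arclength-parameterized geodesic segment `γ : [0,ℓ] → X`, the function `t ↦ d(z,γ(t))` on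
`[0,ℓ]` is a `4δ`-`T`-function. -/
theorem stmt2 {X : Type*} [MetricSpace X] (δ : ℝ) (hδ : 0 ≤ δ)
    (hgeo : GeodesicMS X) (hhyp : DeltaHyp X δ)
    (z : X) (γ : ℝ → X) (ℓ : ℝ) (hℓ : 0 ≤ ℓ)
    (hγ : ∀ s ∈ Set.Icc (0 : ℝ) ℓ, ∀ t ∈ Set.Icc (0 : ℝ) ℓ, dist (γ s) (γ t) = |s - t|) :
    IsDeltaTFun (4 * δ) (fun t => dist z (γ t)) 0 ℓ := by
  
  -- minimizer of t ↦ dist z (γ t) on [0, ℓ]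
  have hfc : ContinuousOn (fun t => dist z (γ t)) (Set.Icc 0 ℓ) :=
    (continuous_const.dist continuous_id).comp_continuousOn (geod_contOn hγ)
  obtain ⟨m, hm, hminOn⟩ := isCompact_Icc.exists_isMinOn
    (Set.nonempty_Icc.2 hℓ) hfc
  have hmin : ∀ t ∈ Set.Icc (0:ℝ) ℓ, dist z (γ m) ≤ dist z (γ t) := fun t ht => hminOn ht
  refine ⟨fun t => |t - m| + dist z (γ m), ⟨m, hm, dist z (γ m), fun t _ => rfl⟩, ?_⟩
  intro t ht
  have hupper : dist z (γ t) ≤ |t - m| + dist z (γ m) := by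
    have h1 := dist_triangle z (γ m) (γ t)
    have h2 : dist (γ m) (γ t) = |m - t| := hγ m hm t ht
    rw [abs_sub_comm t m]
    linarith
  have hlower : |t - m| + dist z (γ m) - 4 * δ ≤ dist z (γ t) := by
    rcases le_total m t with hmt | htm
    · have := key_lemma hδ hgeo hhyp z γ hm.1 hmt ht.2 hγ
        (fun s hs => hmin s ⟨le_trans hm.1 hs.1, le_trans hs.2 ht.2⟩)
      rw [abs_of_nonneg (by linarith)]
      linarith
    · set γ' : ℝ → X := fun s => γ (ℓ - s) with hγ'def
      have hγ' : ∀ s ∈ Set.Icc (0:ℝ) ℓ, ∀ r ∈ Set.Icc (0:ℝ) ℓ,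
          dist (γ' s) (γ' r) = |s - r| := by
        intro s hs r hr
        show dist (γ (ℓ - s)) (γ (ℓ - r)) = |s - r|
        rw [hγ (ℓ - s) ⟨by linarith [hs.2], by linarith [hs.1]⟩
          (ℓ - r) ⟨by linarith [hr.2], by linarith [hr.1]⟩]
        rw [show ℓ - s - (ℓ - r) = -(s - r) by ring, abs_neg]
      have hmin' : ∀ s ∈ Set.Icc (ℓ - m) (ℓ - t), dist z (γ' (ℓ - m)) ≤ dist z (γ' s) := by
        intro s hs
        show dist z (γ (ℓ - (ℓ - m))) ≤ dist z (γ (ℓ - s))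
        rw [show ℓ - (ℓ - m) = m by ring]
        exact hmin (ℓ - s) ⟨by linarith [hs.2, ht.1], by linarith [hs.1, hm.2]⟩
      have := key_lemma hδ hgeo hhyp z γ' (by linarith [hm.2] : (0:ℝ) ≤ ℓ - m)
        (by linarith : ℓ - m ≤ ℓ - t) (by linarith [ht.1]) hγ' hmin'
      have he1 : γ' (ℓ - m) = γ m := by show γ (ℓ - (ℓ - m)) = γ m; congr 1; ring
      have he2 : γ' (ℓ - t) = γ t := by show γ (ℓ - (ℓ - t)) = γ t; congr 1; ring
      rw [he1, he2] at this
      rw [abs_of_nonpos (by linarith)]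
      linarith
  have h4 : (0:ℝ) ≤ 4 * δ := by linarith
  rw [abs_le]
  constructor <;> simp only [] <;> linarith
end

section
/- Let X be a complete, locally compact, geodesic hyperbolic metric space and let B be a Busemann function on X (associated with a geodesic ray). Then for every x ∈ X there exists a B-ray γ : [0,∞) → X with γ(0) = x. -/
open Set Metric Filter
open scoped ENNReal NNReal

/-!
A complete, locally compact geodesic space is proper: the supremum of the radii `r` for which
`closedBall x r` is compact is attained, because each ball is approximated by smaller ones, and it
cannot be finite, because a compact ball has a compact thickening which contains a larger ball.

Given `x`, join it by geodesic segments to the points `γ n` of the ray defining `B`. By properness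
these segments subconverge along an ultrafilter to a ray `f` from `x`. Along the segment towards
`γ n`, `B` drops at least as fast as the distance to `γ n`, so `B (f s) ≤ B x - s` in the limit;
the reverse inequality holds because `B` is `1`-Lipschitz.
-/

open Topology

section Geodesic

variable {X : Type*} [MetricSpace X]

theorem IsGeodSegment.dist_left {γ : ℝ → X} {x y : X} (h : IsGeodSegment γ x y) {s : ℝ}
    (hs : s ∈ Icc 0 (dist x y)) : dist x (γ s) = s := by
  rw [← h.1, h.2.2 0 ⟨le_rfl, dist_nonneg⟩ s hs, zero_sub, abs_neg, abs_of_nonneg hs.1]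

theorem IsGeodSegment.dist_right {γ : ℝ → X} {x y : X} (h : IsGeodSegment γ x y) {s : ℝ}
    (hs : s ∈ Icc 0 (dist x y)) : dist (γ s) y = dist x y - s := by
  conv_lhs => rw [← h.2.1]
  rw [h.2.2 s hs _ ⟨dist_nonneg, le_rfl⟩, abs_sub_comm, abs_of_nonneg (sub_nonneg.2 hs.2)]

theorem GeodesicMS.closedBall_add_subset_cthickening (hgeo : GeodesicMS X) (x : X) {r : ℝ}
    (hr : 0 ≤ r) (ε : ℝ) : closedBall x (r + ε) ⊆ cthickening ε (closedBall x r) := by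
  intro y hy
  rw [mem_closedBall'] at hy
  rcases le_total (dist x y) r with h | h
  · exact self_subset_cthickening _ (mem_closedBall'.2 h)
  · obtain ⟨γ, hγ⟩ := hgeo x y
    have hr' : r ∈ Icc 0 (dist x y) := ⟨hr, h⟩
    refine mem_cthickening_of_dist_le y (γ r) ε _ (mem_closedBall'.2 (hγ.dist_left hr').le) ?_
    rw [dist_comm, hγ.dist_right hr']
    linarith

theorem totallyBounded_of_forall_subset_thickening {s : Set X}
    (h : ∀ ε > 0, ∃ t, TotallyBounded t ∧ s ⊆ thickening ε t) : TotallyBounded s := by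
  refine totallyBounded_iff.2 fun ε hε => ?_
  obtain ⟨t, ht, hst⟩ := h (ε / 2) (half_pos hε)
  obtain ⟨F, hF, htF⟩ := totallyBounded_iff.1 ht (ε / 2) (half_pos hε)
  refine ⟨F, hF, fun z hz => ?_⟩
  obtain ⟨w, hw, hzw⟩ := mem_thickening_iff.1 (hst hz)
  obtain ⟨y, hy, hwy⟩ := mem_iUnion₂.1 (htF hw)
  rw [mem_ball] at hwy
  exact mem_iUnion₂.2 ⟨y, hy, by rw [mem_ball]; linarith [dist_triangle z w y]⟩

theorem GeodesicMS.properSpace [CompleteSpace X] [LocallyCompactSpace X] (hgeo : GeodesicMS X) :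
    ProperSpace X := by
  refine ⟨fun x => ?_⟩
  set T := {r : ℝ | IsCompact (closedBall x r)}
  have hT0 : (0 : ℝ) ∈ T := by simp [T]
  have hT_mono : ∀ {r r'}, r' ∈ T → r ≤ r' → r ∈ T := fun hr' h =>
    hr'.of_isClosed_subset isClosed_closedBall (closedBall_subset_closedBall h)
  by_cases hbdd : BddAbove T
  swap
  · intro r
    obtain ⟨r', hr', hrr'⟩ := not_bddAbove_iff.1 hbdd r
    exact hT_mono hr' hrr'.le
  exfalso
  set R := sSup T
  have hR0 : 0 ≤ R := le_csSup hbdd hT0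
  have hR : R ∈ T := by
    refine (TotallyBounded.isCompact_of_isClosed ?_ isClosed_closedBall)
    refine totallyBounded_of_forall_subset_thickening fun ε hε => ?_
    obtain ⟨r, hr, hRr⟩ := exists_lt_of_lt_csSup ⟨0, hT0⟩ (sub_lt_self R (half_pos hε))
    have hr' : max r 0 ∈ T := by rcases max_choice r 0 with h | h <;> rw [h] <;> assumption
    refine ⟨_, hr'.totallyBounded, ?_⟩
    calc closedBall x R ⊆ closedBall x (max r 0 + ε / 2) :=
          closedBall_subset_closedBall (by linarith [le_max_left r 0])
      _ ⊆ cthickening (ε / 2) (closedBall x (max r 0)) :=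
          hgeo.closedBall_add_subset_cthickening x (le_max_right r 0) _
      _ ⊆ thickening ε (closedBall x (max r 0)) :=
          cthickening_subset_thickening' hε (half_lt_self hε) _
  obtain ⟨δ, hδ, hK⟩ := IsCompact.exists_isCompact_cthickening (s := closedBall x R) hR
  have : R + δ ∈ T :=
    hK.of_isClosed_subset isClosed_closedBall (hgeo.closedBall_add_subset_cthickening x hR0 δ)
  linarith [le_csSup hbdd this]

end Geodesic

section Busemann

variable {X : Type*} [MetricSpace X] {γ : ℝ → X} {B : X → ℝ}

theorem IsRay.dist_of_le (hγ : IsRay γ) {s t : ℝ} (hs : 0 ≤ s) (hst : s ≤ t) :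
    dist (γ s) (γ t) = t - s := by
  rw [hγ s hs t (hs.trans hst), abs_sub_comm, abs_of_nonneg (sub_nonneg.2 hst)]

theorem IsRay.tendsto_dist_atTop (hγ : IsRay γ) (x : X) :
    Tendsto (fun t => dist x (γ t)) atTop atTop := by
  refine tendsto_atTop_mono' _ ?_ (tendsto_atTop_add_const_right _ (-dist x (γ 0)) tendsto_id)
  filter_upwards [eventually_ge_atTop 0] with t ht
  rw [id]
  linarith [dist_triangle (γ 0) x (γ t), dist_comm x (γ 0), hγ.dist_of_le le_rfl ht]

theorem lipschitzWith_one_busemann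
    (hB : ∀ x, Tendsto (fun t => dist x (γ t) - t) atTop (𝓝 (B x))) :
    LipschitzWith 1 B := by
  refine LipschitzWith.of_dist_le_mul fun p q => ?_
  rw [NNReal.coe_one, one_mul]
  refine le_of_tendsto' ((hB p).dist (hB q)) fun t => ?_
  rw [Real.dist_eq, sub_sub_sub_cancel_right]
  exact abs_dist_sub_le _ _ _

theorem busemann_le (hB : ∀ x, Tendsto (fun t => dist x (γ t) - t) atTop (𝓝 (B x)))
    (hγ : IsRay γ) (p : X) {u : ℝ} (hu : 0 ≤ u) :
    B p ≤ dist p (γ u) - u := by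
  refine le_of_tendsto (hB p) ?_
  filter_upwards [eventually_ge_atTop u] with t ht
  linarith [dist_triangle p (γ u) (γ t), hγ.dist_of_le hu ht]

theorem busemann_le_of_isGeodSegment
    (hB : ∀ x, Tendsto (fun t => dist x (γ t) - t) atTop (𝓝 (B x))) (hγ : IsRay γ)
    {x : X} {σ : ℝ → X} {u s : ℝ} (hσ : IsGeodSegment σ x (γ u)) (hu : 0 ≤ u)
    (hs : s ∈ Icc 0 (dist x (γ u))) :
    B (σ s) ≤ dist x (γ u) - u - s := by
  have := busemann_le hB hγ (σ s) hu
  rw [hσ.dist_right hs] at this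
  linarith

end Busemann

theorem exists_isRay_tendsto_of_isGeodSegment {X : Type*} [MetricSpace X] [ProperSpace X]
    {x : X} {y : ℕ → X} {σ : ℕ → ℝ → X} (hσ : ∀ n, IsGeodSegment (σ n) x (y n))
    (hy : Tendsto (fun n => dist x (y n)) atTop atTop) :
    ∃ (U : Ultrafilter ℕ) (f : ℝ → X),
      (U : Filter ℕ) ≤ atTop ∧ IsRay f ∧ f 0 = x ∧
        ∀ s, 0 ≤ s → Tendsto (fun n => σ n s) U (𝓝 (f s)) := by
  set U := hyperfilter ℕ
  have hU : (U : Filter ℕ) ≤ atTop := Nat.cofinite_eq_atTop ▸ hyperfilter_le_cofinite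
  have hmem : ∀ s, 0 ≤ s → ∀ᶠ n in U, s ∈ Icc 0 (dist x (y n)) := fun s hs =>
    hU ((hy.eventually_ge_atTop s).mono fun n hn => ⟨hs, hn⟩)
  have hlim : ∀ s, ∃ p, 0 ≤ s → Tendsto (fun n => σ n s) U (𝓝 p) := by
    intro s
    by_cases hs : 0 ≤ s
    · have hball : ∀ᶠ n in U, σ n s ∈ closedBall x s := (hmem s hs).mono fun n hn =>
        mem_closedBall'.2 ((hσ n).dist_left hn).le
      obtain ⟨p, -, hp⟩ := (isCompact_closedBall x s).ultrafilter_le_nhds' (U.map _) hball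
      exact ⟨p, fun _ => hp⟩
    · exact ⟨x, fun h => absurd h hs⟩
  choose f hf using hlim
  have hf0 : f 0 = x := by
    have h := hf 0 le_rfl
    simp only [(hσ _).1] at h
    exact tendsto_nhds_unique h tendsto_const_nhds
  refine ⟨U, f, hU, fun s hs t ht => ?_, hf0, hf⟩
  refine tendsto_nhds_unique ((hf s hs).dist (hf t ht)) (tendsto_const_nhds.congr' ?_)
  filter_upwards [hmem s hs, hmem t ht] with n hns hnt
  exact ((hσ n).2.2 s hns t hnt).symm

theorem stmt4_general {X : Type*} [MetricSpace X] [CompleteSpace X] [LocallyCompactSpace X]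
    (hgeo : GeodesicMS X)
    (B : X → ℝ) (hB : IsBusemann B) (x : X) :
    ∃ γ : ℝ → X, IsBRay B γ ∧ γ 0 = x := by
  have := hgeo.properSpace
  obtain ⟨γ, hγ, hbus⟩ := hB
  have hdist := (hγ.tendsto_dist_atTop x).comp tendsto_natCast_atTop_atTop
  choose σ hσ using fun n : ℕ => hgeo x (γ n)
  obtain ⟨U, f, hU, hf, hf0, hlim⟩ := exists_isRay_tendsto_of_isGeodSegment hσ hdist
  have hlip := lipschitzWith_one_busemann hbus
  refine ⟨f, ⟨hf, fun s hs => le_antisymm ?_ ?_⟩, hf0⟩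
  · rw [hf0]
    refine le_of_tendsto_of_tendsto ((hlip.continuous.tendsto _).comp (hlim s hs))
      ((((hbus x).comp tendsto_natCast_atTop_atTop).sub_const s).mono_left hU) ?_
    filter_upwards [hU (hdist.eventually_ge_atTop s)] with n hn
    exact busemann_le_of_isGeodSegment hbus hγ (hσ n) (Nat.cast_nonneg n) ⟨hs, hn⟩
  · have := hlip.le_add_mul (f 0) (f s)
    rw [hf.dist_of_le le_rfl hs, NNReal.coe_one, one_mul, sub_zero] at this
    linarith

/-- Lemma 3: Let `X` be a complete, locally compact, geodesic hyperbolic metric space and `B`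
a Busemann function on `X`.  Then for every `x ∈ X` there exists a `B`-ray `γ` with
`γ(0) = x`. -/
theorem stmt4 {X : Type*} [MetricSpace X] [CompleteSpace X] [LocallyCompactSpace X]
    (hgeo : GeodesicMS X) (hhyp : GromovHyperbolic X)
    (B : X → ℝ) (hB : IsBusemann B) (x : X) :
    ∃ γ : ℝ → X, IsBRay B γ ∧ γ 0 = x :=
  stmt4_general hgeo B hB x
end

section
/- Let X be a proper geodesic δ-hyperbolic metric space, B a Busemann function on X, and x,y ∈ X. Let γ_x and γ_y be B-rays starting at x and y respectively, set a := (y·B)_x and b := (x·B)_y (so a + b = d(x,y)), let γ_{xy} be a geodesic segment from x to y, and put ũ := γ_{xy}(a), ỹ := γ_x(a), x̃ := γ_y(b). Then the points x̃, ỹ, ũ have pairwise distances at most 8δ. -/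
open Set Metric Filter
open scoped ENNReal NNReal

section Helpers

variable {X : Type*} [MetricSpace X]

lemma seg_dist_left {γ : ℝ → X} {u v : X} (h : IsGeodSegment γ u v)
    {s : ℝ} (hs : s ∈ Set.Icc 0 (dist u v)) : dist u (γ s) = s := by
  have h0 : (0:ℝ) ∈ Set.Icc 0 (dist u v) := ⟨le_refl _, dist_nonneg⟩
  have h2 := h.2.2 0 h0 s hs
  rw [h.1] at h2
  rw [h2, abs_of_nonpos (by linarith [hs.1])]
  ring

lemma seg_dist_right {γ : ℝ → X} {u v : X} (h : IsGeodSegment γ u v)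
    {s : ℝ} (hs : s ∈ Set.Icc 0 (dist u v)) : dist v (γ s) = dist u v - s := by
  have h0 : (dist u v) ∈ Set.Icc 0 (dist u v) := ⟨dist_nonneg, le_refl _⟩
  have h2 := h.2.2 (dist u v) h0 s hs
  rw [h.2.1] at h2
  rw [h2, abs_of_nonneg (by linarith [hs.2])]

lemma IsGeodSegment.rev {γ : ℝ → X} {u v : X} (h : IsGeodSegment γ u v) :
    IsGeodSegment (fun t => γ (dist u v - t)) v u := by
  have hd : dist v u = dist u v := dist_comm v u
  refine ⟨by simpa using h.2.1, by simpa [hd] using h.1, ?_⟩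
  intro s hs t ht
  rw [hd] at hs ht
  have h2 := h.2.2 (dist u v - s) ⟨by linarith [hs.2], by linarith [hs.1]⟩
      (dist u v - t) ⟨by linarith [ht.2], by linarith [ht.1]⟩
  simp only at h2 ⊢
  rw [h2, show (dist u v - s) - (dist u v - t) = t - s by ring, abs_sub_comm]

/-- Quasi-midpoint lemma. -/
lemma lemQ (hgeo : GeodesicMS X) {δ : ℝ} (hδ : 0 ≤ δ) (hhyp : DeltaHyp X δ)
    {u v m : X} {h : ℝ → X} (hh : IsGeodSegment h u v) {ε : ℝ}
    (hex : dist u m + dist m v ≤ dist u v + ε) (hle : dist u m ≤ dist u v) :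
    dist m (h (dist u m)) ≤ ε + 2 * δ := by
  have hε0 : 0 ≤ ε := by have := dist_triangle u m v; linarith
  obtain ⟨g1, hg1⟩ := hgeo u m
  obtain ⟨g2, hg2⟩ := hgeo v m
  have hρ : (dist u m) ∈ Set.Icc (0:ℝ) (dist u v) := ⟨dist_nonneg, hle⟩
  obtain ⟨w, hw, hdw⟩ := hhyp u v m h g1 g2 hh hg1 hg2 (dist u m) hρ
  have hpu : dist u (h (dist u m)) = dist u m := seg_dist_left hh hρ
  have hpv : dist v (h (dist u m)) = dist u v - dist u m := seg_dist_right hh hρ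
  rcases hw with hw | hw
  · obtain ⟨s, hs, rfl⟩ := hw
    have e1 : dist u (g1 s) = s := seg_dist_left hg1 hs
    have e2 : dist m (g1 s) = dist u m - s := seg_dist_right hg1 hs
    have e3 : |dist (g1 s) u - dist (h (dist u m)) u| ≤ dist (g1 s) (h (dist u m)) :=
      abs_dist_sub_le _ _ _
    rw [dist_comm (g1 s) u, dist_comm (h (dist u m)) u, e1, hpu,
      dist_comm (g1 s) (h (dist u m))] at e3
    have e5 := abs_le.mp (e3.trans hdw)
    have e6 : dist m (h (dist u m)) ≤ dist m (g1 s) + dist (g1 s) (h (dist u m)) :=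
      dist_triangle _ _ _
    rw [e2, dist_comm (g1 s) (h (dist u m))] at e6
    linarith [e5.1, hdw]
  · obtain ⟨s, hs, rfl⟩ := hw
    have e1 : dist v (g2 s) = s := seg_dist_left hg2 hs
    have e2 : dist m (g2 s) = dist v m - s := seg_dist_right hg2 hs
    have e3 : |dist (g2 s) v - dist (h (dist u m)) v| ≤ dist (g2 s) (h (dist u m)) :=
      abs_dist_sub_le _ _ _
    rw [dist_comm (g2 s) v, dist_comm (h (dist u m)) v, e1, hpv,
      dist_comm (g2 s) (h (dist u m))] at e3
    have e5 := abs_le.mp (e3.trans hdw)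
    have e6 : dist m (h (dist u m)) ≤ dist m (g2 s) + dist (g2 s) (h (dist u m)) :=
      dist_triangle _ _ _
    rw [e2, dist_comm (g2 s) (h (dist u m))] at e6
    have hvm : dist v m = dist m v := dist_comm _ _
    linarith [e5.1, hdw]

/-- The three internal points of a triangle in a `δ`-thin space are pairwise `≤ 4δ` apart. -/
lemma internalPts {δ : ℝ} (hδ : 0 ≤ δ) (hhyp : DeltaHyp X δ)
    {x y z : X} {gxy gxz gyz : ℝ → X}
    (h1 : IsGeodSegment gxy x y) (h2 : IsGeodSegment gxz x z) (h3 : IsGeodSegment gyz y z) :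
    dist (gxy ((dist x y + dist x z - dist y z)/2)) (gxz ((dist x y + dist x z - dist y z)/2)) ≤ 4*δ ∧
    dist (gxy ((dist x y + dist x z - dist y z)/2)) (gyz ((dist x y + dist y z - dist x z)/2)) ≤ 4*δ ∧
    dist (gxz ((dist x y + dist x z - dist y z)/2)) (gyz ((dist x y + dist y z - dist x z)/2)) ≤ 4*δ := by
  set d1 := dist x y with hd1
  set d2 := dist x z with hd2
  set d3 := dist y z with hd3
  set α := (d1 + d2 - d3)/2 with hα
  set β := (d1 + d3 - d2)/2 with hβ
  have t1 : d1 ≤ d2 + d3 := by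
    have h' := dist_triangle x z y; rw [dist_comm z y] at h'; exact h'
  have t2 : d2 ≤ d1 + d3 := dist_triangle x y z
  have t3 : d3 ≤ d1 + d2 := by
    have h' := dist_triangle y x z; rw [dist_comm y x] at h'
    calc d3 ≤ d1 + dist x z := h'
      _ = d1 + d2 := rfl
  have hα1 : α ∈ Set.Icc (0:ℝ) d1 := ⟨by rw [hα]; linarith, by rw [hα]; linarith⟩
  have hα2 : α ∈ Set.Icc (0:ℝ) d2 := ⟨hα1.1, by rw [hα]; linarith⟩
  have hβ1 : β ∈ Set.Icc (0:ℝ) d1 := ⟨by rw [hβ]; linarith, by rw [hβ]; linarith⟩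
  have hβ3 : β ∈ Set.Icc (0:ℝ) d3 := ⟨hβ1.1, by rw [hβ]; linarith⟩
  have pxp : dist x (gxy α) = α := seg_dist_left h1 hα1
  have pyp : dist y (gxy α) = β := by
    have h' := seg_dist_right h1 hα1; rw [h', hα, hβ]; ring
  have pxq : dist x (gxz α) = α := seg_dist_left h2 hα2
  have pzq : dist z (gxz α) = d2 - α := seg_dist_right h2 hα2
  have pyr : dist y (gyz β) = β := seg_dist_left h3 hβ3
  have pzr : dist z (gyz β) = d2 - α := by
    have h' := seg_dist_right h3 hβ3; rw [h', hα, hβ]; ring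
  have hP : dist (gxy α) (gxz α) ≤ 2*δ ∨ dist (gxy α) (gyz β) ≤ 2*δ := by
    obtain ⟨w, hw, hdw⟩ := hhyp x y z gxy gxz gyz h1 h2 h3 α hα1
    rcases hw with hw | hw
    · obtain ⟨s, hs, rfl⟩ := hw
      left
      have e1 : dist x (gxz s) = s := seg_dist_left h2 hs
      have e3 : |dist (gxz s) x - dist (gxy α) x| ≤ dist (gxz s) (gxy α) := abs_dist_sub_le _ _ _
      rw [dist_comm (gxz s) x, dist_comm (gxy α) x, e1, pxp, dist_comm (gxz s) (gxy α)] at e3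
      have e5 : |s - α| ≤ δ := e3.trans hdw
      have e6 : dist (gxz s) (gxz α) = |s - α| := h2.2.2 s hs α hα2
      calc dist (gxy α) (gxz α) ≤ dist (gxy α) (gxz s) + dist (gxz s) (gxz α) := dist_triangle _ _ _
        _ ≤ δ + |s - α| := by rw [e6]; exact add_le_add hdw le_rfl
        _ ≤ 2*δ := by linarith
    · obtain ⟨s, hs, rfl⟩ := hw
      right
      have e1 : dist y (gyz s) = s := seg_dist_left h3 hs
      have e3 : |dist (gyz s) y - dist (gxy α) y| ≤ dist (gyz s) (gxy α) := abs_dist_sub_le _ _ _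
      rw [dist_comm (gyz s) y, dist_comm (gxy α) y, e1, pyp, dist_comm (gyz s) (gxy α)] at e3
      have e5 : |s - β| ≤ δ := e3.trans hdw
      have e6 : dist (gyz s) (gyz β) = |s - β| := h3.2.2 s hs β hβ3
      calc dist (gxy α) (gyz β) ≤ dist (gxy α) (gyz s) + dist (gyz s) (gyz β) := dist_triangle _ _ _
        _ ≤ δ + |s - β| := by rw [e6]; exact add_le_add hdw le_rfl
        _ ≤ 2*δ := by linarith
  have hQ : dist (gxz α) (gxy α) ≤ 2*δ ∨ dist (gxz α) (gyz β) ≤ 2*δ := by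
    obtain ⟨w, hw, hdw⟩ := hhyp x z y gxz gxy (fun t => gyz (dist y z - t)) h2 h1 h3.rev α hα2
    rcases hw with hw | hw
    · obtain ⟨s, hs, rfl⟩ := hw
      left
      have e1 : dist x (gxy s) = s := seg_dist_left h1 hs
      have e3 : |dist (gxy s) x - dist (gxz α) x| ≤ dist (gxy s) (gxz α) := abs_dist_sub_le _ _ _
      rw [dist_comm (gxy s) x, dist_comm (gxz α) x, e1, pxq, dist_comm (gxy s) (gxz α)] at e3
      have e5 : |s - α| ≤ δ := e3.trans hdw
      have e6 : dist (gxy s) (gxy α) = |s - α| := h1.2.2 s hs α hα1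
      calc dist (gxz α) (gxy α) ≤ dist (gxz α) (gxy s) + dist (gxy s) (gxy α) := dist_triangle _ _ _
        _ ≤ δ + |s - α| := by rw [e6]; exact add_le_add hdw le_rfl
        _ ≤ 2*δ := by linarith
    · obtain ⟨s, hs, hws⟩ := hw
      right
      rw [dist_comm z y] at hs
      have hws' : w = gyz (d3 - s) := hws.symm
      subst hws'
      have hs' : d3 - s ∈ Set.Icc (0:ℝ) d3 := ⟨by linarith [hs.2], by linarith [hs.1]⟩
      have e1 : dist z (gyz (d3 - s)) = s := by
        have h' := seg_dist_right h3 hs'; rw [h']; ring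
      have e3 : |dist (gyz (d3 - s)) z - dist (gxz α) z| ≤ dist (gyz (d3 - s)) (gxz α) :=
        abs_dist_sub_le _ _ _
      rw [dist_comm (gyz (d3 - s)) z, dist_comm (gxz α) z, e1, pzq,
        dist_comm (gyz (d3 - s)) (gxz α)] at e3
      have e5 : |s - (d2 - α)| ≤ δ := e3.trans hdw
      have e6 : dist (gyz (d3 - s)) (gyz β) = |(d3 - s) - β| := h3.2.2 _ hs' β hβ3
      have e7 : |(d3 - s) - β| = |s - (d2 - α)| := by
        rw [show (d3 - s) - β = -(s - (d2 - α)) by rw [hα, hβ]; ring, abs_neg]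
      calc dist (gxz α) (gyz β) ≤ dist (gxz α) (gyz (d3 - s)) + dist (gyz (d3 - s)) (gyz β) :=
            dist_triangle _ _ _
        _ ≤ δ + |s - (d2 - α)| := by rw [e6, e7]; exact add_le_add hdw le_rfl
        _ ≤ 2*δ := by linarith
  have hR : dist (gyz β) (gxy α) ≤ 2*δ ∨ dist (gyz β) (gxz α) ≤ 2*δ := by
    obtain ⟨w, hw, hdw⟩ :=
      hhyp y z x gyz (fun t => gxy (dist x y - t)) (fun t => gxz (dist x z - t))
        h3 h1.rev h2.rev β hβ3
    rcases hw with hw | hw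
    · obtain ⟨s, hs, hws⟩ := hw
      left
      rw [dist_comm y x] at hs
      have hws' : w = gxy (d1 - s) := hws.symm
      subst hws'
      have hs' : d1 - s ∈ Set.Icc (0:ℝ) d1 := ⟨by linarith [hs.2], by linarith [hs.1]⟩
      have e1 : dist y (gxy (d1 - s)) = s := by
        have h' := seg_dist_right h1 hs'; rw [h']; ring
      have e3 : |dist (gxy (d1 - s)) y - dist (gyz β) y| ≤ dist (gxy (d1 - s)) (gyz β) :=
        abs_dist_sub_le _ _ _
      rw [dist_comm (gxy (d1 - s)) y, dist_comm (gyz β) y, e1, pyr,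
        dist_comm (gxy (d1 - s)) (gyz β)] at e3
      have e5 : |s - β| ≤ δ := e3.trans hdw
      have e6 : dist (gxy (d1 - s)) (gxy α) = |(d1 - s) - α| := h1.2.2 _ hs' α hα1
      have e7 : |(d1 - s) - α| = |s - β| := by
        rw [show (d1 - s) - α = -(s - β) by rw [hα, hβ]; ring, abs_neg]
      calc dist (gyz β) (gxy α) ≤ dist (gyz β) (gxy (d1 - s)) + dist (gxy (d1 - s)) (gxy α) :=
            dist_triangle _ _ _
        _ ≤ δ + |s - β| := by rw [e6, e7]; exact add_le_add hdw le_rfl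
        _ ≤ 2*δ := by linarith
    · obtain ⟨s, hs, hws⟩ := hw
      right
      rw [dist_comm z x] at hs
      have hws' : w = gxz (d2 - s) := hws.symm
      subst hws'
      have hs' : d2 - s ∈ Set.Icc (0:ℝ) d2 := ⟨by linarith [hs.2], by linarith [hs.1]⟩
      have e1 : dist z (gxz (d2 - s)) = s := by
        have h' := seg_dist_right h2 hs'; rw [h']; ring
      have e3 : |dist (gxz (d2 - s)) z - dist (gyz β) z| ≤ dist (gxz (d2 - s)) (gyz β) :=
        abs_dist_sub_le _ _ _
      rw [dist_comm (gxz (d2 - s)) z, dist_comm (gyz β) z, e1, pzr,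
        dist_comm (gxz (d2 - s)) (gyz β)] at e3
      have e5 : |s - (d2 - α)| ≤ δ := e3.trans hdw
      have e6 : dist (gxz (d2 - s)) (gxz α) = |(d2 - s) - α| := h2.2.2 _ hs' α hα2
      have e7 : |(d2 - s) - α| = |s - (d2 - α)| := by
        rw [show (d2 - s) - α = -(s - (d2 - α)) by ring, abs_neg]
      calc dist (gyz β) (gxz α) ≤ dist (gyz β) (gxz (d2 - s)) + dist (gxz (d2 - s)) (gxz α) :=
            dist_triangle _ _ _
        _ ≤ δ + |s - (d2 - α)| := by rw [e6, e7]; exact add_le_add hdw le_rfl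
        _ ≤ 2*δ := by linarith
  refine ⟨?_, ?_, ?_⟩
  · rcases hP with h' | h'
    · linarith
    · rcases hQ with h'' | h''
      · rw [dist_comm]; linarith
      · have := dist_triangle (gxy α) (gyz β) (gxz α)
        rw [dist_comm (gyz β) (gxz α)] at this
        linarith
  · rcases hP with h' | h'
    · rcases hR with h'' | h''
      · rw [dist_comm]; linarith
      · have := dist_triangle (gxy α) (gxz α) (gyz β)
        rw [dist_comm (gyz β) (gxz α)] at h''
        linarith
    · linarith
  · rcases hQ with h' | h'
    · rcases hR with h'' | h''
      · have := dist_triangle (gxz α) (gxy α) (gyz β)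
        rw [dist_comm (gyz β) (gxy α)] at h''
        linarith
      · rw [dist_comm]; linarith
    · linarith

end Helpers

/-- Lemma 4 i): Let `X` be a proper geodesic `δ`-hyperbolic space, `B` a Busemann function,
`x,y ∈ X`, `γ_x, γ_y` `B`-rays starting at `x, y`, `a = (y⬝B)_x`, `b = (x⬝B)_y`,
`γ_{xy}` a geodesic from `x` to `y`, and `ũ = γ_{xy}(a)`, `ỹ = γ_x(a)`, `x̃ = γ_y(b)`.
Then `x̃, ỹ, ũ` have pairwise distances at most `8δ`. -/
theorem stmt5 {X : Type*} [MetricSpace X] [ProperSpace X]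
    (hgeo : GeodesicMS X) (δ : ℝ) (hδ : 0 ≤ δ) (hhyp : DeltaHyp X δ)
    (B : X → ℝ) (hB : IsBusemann B) (x y : X)
    (γx γy : ℝ → X) (hγx : IsBRay B γx) (hγy : IsBRay B γy)
    (hx0 : γx 0 = x) (hy0 : γy 0 = y)
    (gxy : ℝ → X) (hgxy : IsGeodSegment gxy x y) :
    dist (γy (gpB B y x)) (γx (gpB B x y)) ≤ 8 * δ ∧
    dist (γy (gpB B y x)) (gxy (gpB B x y)) ≤ 8 * δ ∧
    dist (γx (gpB B x y)) (gxy (gpB B x y)) ≤ 8 * δ := by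
  obtain ⟨γ, hray, hconv⟩ := hB
  have hLip : ∀ z w : X, B z - B w ≤ dist z w := by
    intro z w
    have h1 : Filter.Tendsto (fun t => (dist z (γ t) - t) - (dist w (γ t) - t))
        Filter.atTop (nhds (B z - B w)) := (hconv z).sub (hconv w)
    refine le_of_tendsto h1 (Filter.Eventually.of_forall fun t => ?_)
    have h2 := abs_dist_sub_le z w (γ t)
    have h3 := (abs_le.mp h2).2
    linarith
  set a := gpB B x y with haa
  set b := gpB B y x with hbb
  have haval : a = (dist x y + B x - B y)/2 := rfl
  have hbval : b = (dist x y + B y - B x)/2 := by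
    rw [hbb]; unfold gpB; rw [dist_comm y x]
  have ha0 : 0 ≤ a := by have := hLip y x; rw [dist_comm y x] at this; rw [haval]; linarith
  have hb0 : 0 ≤ b := by have := hLip x y; rw [hbval]; linarith
  have hab : a + b = dist x y := by rw [haval, hbval]; ring
  have hmono : ∀ (z : X) (s t : ℝ), 0 ≤ s → s ≤ t →
      dist z (γ t) - t ≤ dist z (γ s) - s := by
    intro z s t hs hst
    have h1 := hray s (Set.mem_Ici.mpr hs) t (Set.mem_Ici.mpr (hs.trans hst))
    have h2 : dist z (γ t) ≤ dist z (γ s) + dist (γ s) (γ t) := dist_triangle _ _ _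
    rw [h1, abs_of_nonpos (by linarith)] at h2
    linarith
  have hBlb : ∀ (z : X) (s : ℝ), 0 ≤ s → B z ≤ dist z (γ s) - s := by
    intro z s hs
    refine le_of_tendsto (hconv z) ?_
    filter_upwards [Filter.eventually_ge_atTop s] with t ht
    exact hmono z s t hs ht
  have hBxa : B (γx a) = B x - a := by
    have h' := hγx.2 a (Set.mem_Ici.mpr ha0); rw [hx0] at h'; exact h'
  have hByb : B (γy b) = B y - b := by
    have h' := hγy.2 b (Set.mem_Ici.mpr hb0); rw [hy0] at h'; exact h'
  have hdxa : dist x (γx a) = a := by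
    have h' := hγx.1 0 (Set.mem_Ici.mpr le_rfl) a (Set.mem_Ici.mpr ha0)
    rw [hx0] at h'; rw [h', abs_of_nonpos (by linarith)]; ring
  have hdyb : dist y (γy b) = b := by
    have h' := hγy.1 0 (Set.mem_Ici.mpr le_rfl) b (Set.mem_Ici.mpr hb0)
    rw [hy0] at h'; rw [h', abs_of_nonpos (by linarith)]; ring
  have key : ∀ ε : ℝ, 0 < ε →
      dist (γy b) (γx a) ≤ 8*δ + ε ∧ dist (γy b) (gxy a) ≤ 8*δ + ε ∧
      dist (γx a) (gxy a) ≤ 8*δ + ε := by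
    intro ε hε
    set ε' := ε/4 with hε'def
    have hε'0 : 0 < ε' := by positivity
    have E1 : ∀ᶠ t in Filter.atTop, dist x (γ t) - t < B x + ε' :=
      (hconv x).eventually_lt_const (by linarith)
    have E2 : ∀ᶠ t in Filter.atTop, dist y (γ t) - t < B y + ε' :=
      (hconv y).eventually_lt_const (by linarith)
    have E3 : ∀ᶠ t in Filter.atTop, dist (γx a) (γ t) - t < B (γx a) + ε' :=
      (hconv (γx a)).eventually_lt_const (by linarith)
    have E4 : ∀ᶠ t in Filter.atTop, dist (γy b) (γ t) - t < B (γy b) + ε' :=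
      (hconv (γy b)).eventually_lt_const (by linarith)
    have E5 : ∀ᶠ t in Filter.atTop, max 0 (max (a - B x) (b - B y)) ≤ t :=
      Filter.eventually_ge_atTop _
    obtain ⟨S, e1, e2, e3, e4, e5⟩ := (E1.and (E2.and (E3.and (E4.and E5)))).exists
    have hS0 : (0:ℝ) ≤ S := le_trans (le_max_left _ _) e5
    have hSa : a - B x ≤ S := le_trans ((le_max_left _ _).trans (le_max_right _ _)) e5
    have hSb : b - B y ≤ S := le_trans ((le_max_right _ _).trans (le_max_right _ _)) e5
    set z := γ S with hzdef
    have hd2l : S + B x ≤ dist x z := by have := hBlb x S hS0; linarith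
    have hd2u : dist x z ≤ S + B x + ε' := by linarith [e1]
    have hd3l : S + B y ≤ dist y z := by have := hBlb y S hS0; linarith
    have hd3u : dist y z ≤ S + B y + ε' := by linarith [e2]
    have hγxau : dist (γx a) z ≤ S + (B x - a) + ε' := by rw [← hBxa]; linarith [e3]
    have hγybu : dist (γy b) z ≤ S + (B y - b) + ε' := by rw [← hByb]; linarith [e4]
    obtain ⟨h, hh⟩ := hgeo x z
    obtain ⟨g, hg⟩ := hgeo y z
    set α := (dist x y + dist x z - dist y z)/2 with hαdef
    set β := (dist x y + dist y z - dist x z)/2 with hβdef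
    obtain ⟨i1, i2, i3⟩ := internalPts hδ hhyp hgxy hh hg
    have t1 : dist x y ≤ dist x z + dist y z := by
      have h' := dist_triangle x z y; rw [dist_comm z y] at h'; exact h'
    have t2 : dist x z ≤ dist x y + dist y z := dist_triangle x y z
    have t3 : dist y z ≤ dist x y + dist x z := by
      have h' := dist_triangle y x z; rw [dist_comm y x] at h'; exact h'
    have hαa : |α - a| ≤ ε' := by
      rw [abs_le]; constructor <;> (rw [hαdef, haval]; try linarith)
    have hβb : |β - b| ≤ ε' := by
      rw [abs_le]; constructor <;> (rw [hβdef, hbval]; try linarith)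
    have hα1 : α ∈ Set.Icc (0:ℝ) (dist x y) :=
      ⟨by rw [hαdef]; linarith, by rw [hαdef]; linarith⟩
    have hα2 : α ∈ Set.Icc (0:ℝ) (dist x z) := ⟨hα1.1, by rw [hαdef]; linarith⟩
    have hβ1 : β ∈ Set.Icc (0:ℝ) (dist x y) :=
      ⟨by rw [hβdef]; linarith, by rw [hβdef]; linarith⟩
    have hβ3 : β ∈ Set.Icc (0:ℝ) (dist y z) := ⟨hβ1.1, by rw [hβdef]; linarith⟩
    have haI : a ∈ Set.Icc (0:ℝ) (dist x y) := ⟨ha0, by linarith⟩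
    have haI2 : a ∈ Set.Icc (0:ℝ) (dist x z) := ⟨ha0, by linarith⟩
    have hbI3 : b ∈ Set.Icc (0:ℝ) (dist y z) := ⟨hb0, by linarith⟩
    -- γx a is close to h α
    have hQ1 : dist (γx a) (h α) ≤ 2*δ + 2*ε' := by
      have hex : dist x (γx a) + dist (γx a) z ≤ dist x z + ε' := by
        rw [hdxa]; linarith
      have hle : dist x (γx a) ≤ dist x z := by rw [hdxa]; linarith
      have hq := lemQ hgeo hδ hhyp hh hex hle
      rw [hdxa] at hq
      have hst : dist (h a) (h α) = |a - α| := hh.2.2 a haI2 α hα2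
      have htr : dist (γx a) (h α) ≤ dist (γx a) (h a) + dist (h a) (h α) := dist_triangle _ _ _
      rw [hst] at htr
      have : |a - α| ≤ ε' := by rw [abs_sub_comm]; exact hαa
      linarith
    -- γy b is close to g β
    have hQ2 : dist (γy b) (g β) ≤ 2*δ + 2*ε' := by
      have hex : dist y (γy b) + dist (γy b) z ≤ dist y z + ε' := by
        rw [hdyb]; linarith
      have hle : dist y (γy b) ≤ dist y z := by rw [hdyb]; linarith
      have hq := lemQ hgeo hδ hhyp hg hex hle
      rw [hdyb] at hq
      have hst : dist (g b) (g β) = |b - β| := hg.2.2 b hbI3 β hβ3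
      have htr : dist (γy b) (g β) ≤ dist (γy b) (g b) + dist (g b) (g β) := dist_triangle _ _ _
      rw [hst] at htr
      have : |b - β| ≤ ε' := by rw [abs_sub_comm]; exact hβb
      linarith
    have hu : dist (gxy a) (gxy α) ≤ ε' := by
      have hst : dist (gxy a) (gxy α) = |a - α| := hgxy.2.2 a haI α hα1
      rw [hst, abs_sub_comm]; exact hαa
    refine ⟨?_, ?_, ?_⟩
    · have htr : dist (γy b) (γx a) ≤ dist (γy b) (g β) + dist (g β) (h α) + dist (h α) (γx a) :=
        dist_triangle4 _ _ _ _
      rw [dist_comm (g β) (h α), dist_comm (h α) (γx a)] at htr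
      have : ε = 4 * ε' := by rw [hε'def]; ring
      linarith [i3]
    · have htr : dist (γy b) (gxy a) ≤ dist (γy b) (g β) + dist (g β) (gxy α) + dist (gxy α) (gxy a) :=
        dist_triangle4 _ _ _ _
      rw [dist_comm (g β) (gxy α), dist_comm (gxy α) (gxy a)] at htr
      have : ε = 4 * ε' := by rw [hε'def]; ring
      linarith [i2]
    · have htr : dist (γx a) (gxy a) ≤ dist (γx a) (h α) + dist (h α) (gxy α) + dist (gxy α) (gxy a) :=
        dist_triangle4 _ _ _ _
      rw [dist_comm (h α) (gxy α), dist_comm (gxy α) (gxy a)] at htr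
      have : ε = 4 * ε' := by rw [hε'def]; ring
      linarith [i1]
  exact ⟨le_of_forall_pos_le_add fun ε hε => (key ε hε).1,
    le_of_forall_pos_le_add fun ε hε => (key ε hε).2.1,
    le_of_forall_pos_le_add fun ε hε => (key ε hε).2.2⟩
end

section
/- Let X be a proper geodesic δ-hyperbolic metric space, B a Busemann function on X, and x,y ∈ X. Let γ_x and γ_y be B-rays starting at x and y respectively, and set a := (y·B)_x and b := (x·B)_y. Then for all t ≥ 0 one has d(γ_x(a+t), γ_y(b+t)) ≤ 8δ. -/
open Set Metric Filter
open scoped ENNReal NNReal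

/-- Busemann functions are 1-Lipschitz. -/
lemma buse_lip {X : Type*} [MetricSpace X] {B : X → ℝ} (hB : IsBusemann B) (z1 z2 : X) :
    B z1 - B z2 ≤ dist z1 z2 := by
  obtain ⟨γ, hγ, hγt⟩ := hB
  have h : B z1 ≤ dist z1 z2 + B z2 := by
    refine le_of_tendsto_of_tendsto' (hγt z1) (tendsto_const_nhds.add (hγt z2)) fun u => ?_
    show dist z1 (γ u) - u ≤ dist z1 z2 + (dist z2 (γ u) - u)
    linarith [dist_triangle z1 z2 (γ u)]
  linarith

/-- Key lemma: distance to a point on a `B`-ray. -/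
lemma buse_key {X : Type*} [MetricSpace X] (hgeo : GeodesicMS X) {δ : ℝ} (hδ : 0 ≤ δ)
    (hhyp : DeltaHyp X δ) {B : X → ℝ} {γ : ℝ → X} (hγ : IsRay γ)
    (hγt : ∀ z : X, Filter.Tendsto (fun t => dist z (γ t) - t) Filter.atTop (nhds (B z)))
    {σ : ℝ → X} (hσ : IsBRay B σ) (u : X) {T : ℝ} (hT : 0 ≤ T) :
    dist u (σ T) ≤ max (dist u (σ 0) - T) (B u - B (σ 0) + T) + 4 * δ := by
  have hray := hσ.1
  -- F1 : lower bound for distances to the defining ray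
  have F1 : ∀ z : X, ∀ s : ℝ, 0 ≤ s → B z + s ≤ dist z (γ s) := by
    intro z s hs
    have hle : B z ≤ dist z (γ s) - s := by
      refine le_of_tendsto (hγt z) ?_
      filter_upwards [eventually_ge_atTop s] with v hv
      have h1 := dist_triangle z (γ s) (γ v)
      have h2 : dist (γ s) (γ v) = |s - v| := hγ s (Set.mem_Ici.mpr hs) v (Set.mem_Ici.mpr (hs.trans hv))
      rw [abs_of_nonpos (by linarith)] at h2
      linarith
    linarith
  have main : ∀ ε : ℝ, 0 < ε → ε ≤ 1 →
      dist u (σ T) ≤ max (dist u (σ 0) - T) (B u - B (σ 0) + T) + 4 * δ + ε := by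
    intro ε hε hε1
    set R : ℝ := T + δ + 1 with hRdef
    have hR0 : (0:ℝ) ≤ R := by positivity
    -- choose S large
    obtain ⟨S, hS0, hSu, hSR⟩ : ∃ S : ℝ, 0 ≤ S ∧ dist u (γ S) ≤ S + B u + ε ∧
        dist (σ R) (γ S) ≤ S + B (σ R) + ε := by
      have h1 := (hγt u).eventually_lt_const (show B u < B u + ε by linarith)
      have h2 := (hγt (σ R)).eventually_lt_const (show B (σ R) < B (σ R) + ε by linarith)
      obtain ⟨S, hS0, h1, h2⟩ := ((eventually_ge_atTop (0:ℝ)).and (h1.and h2)).exists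
      exact ⟨S, hS0, by linarith [h1], by linarith [h2]⟩
    have hBσR : B (σ R) = B (σ 0) - R := hσ.2 R (Set.mem_Ici.mpr hR0)
    have hBσT : B (σ T) = B (σ 0) - T := hσ.2 T (Set.mem_Ici.mpr hT)
    -- σ restricted is a geodesic segment from σ 0 to σ R
    have hdistR : dist (σ 0) (σ R) = R := by
      rw [hray 0 (Set.mem_Ici.mpr le_rfl) R (Set.mem_Ici.mpr hR0), zero_sub, abs_neg, abs_of_nonneg hR0]
    have hσseg : IsGeodSegment σ (σ 0) (σ R) := by
      refine ⟨rfl, by rw [hdistR], fun s hs t ht => ?_⟩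
      rw [hdistR] at hs ht
      exact hray s (Set.mem_Ici.mpr hs.1) t (Set.mem_Ici.mpr ht.1)
    obtain ⟨g₁, hg₁⟩ := hgeo (σ 0) (γ S)
    obtain ⟨g₂, hg₂⟩ := hgeo (σ R) (γ S)
    have hTmem : T ∈ Set.Icc (0:ℝ) (dist (σ 0) (σ R)) := by
      rw [hdistR]; exact ⟨hT, by linarith⟩
    obtain ⟨w, hw, hdw⟩ := hhyp (σ 0) (σ R) (γ S) σ g₁ g₂ hσseg hg₁ hg₂ T hTmem
    have hσTγS : B (σ 0) - T + S ≤ dist (σ T) (γ S) := by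
      have := F1 (σ T) S hS0; linarith
    rcases hw with hw | hw
    · -- w on the geodesic from σ 0 to γ S : do the second triangle
      obtain ⟨m, hm, rfl⟩ := hw
      obtain ⟨g₃, hg₃⟩ := hgeo (σ 0) u
      obtain ⟨g₄, hg₄⟩ := hgeo (γ S) u
      obtain ⟨w', hw', hdw'⟩ := hhyp (σ 0) (γ S) u g₁ g₃ g₄ hg₁ hg₃ hg₄ m hm
      have hdσTw' : dist (σ T) w' ≤ 2 * δ :=
        (dist_triangle (σ T) (g₁ m) w').trans (by linarith)
      rcases hw' with hw' | hw'
      · -- w' on the geodesic from σ 0 to u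
        obtain ⟨j, hj, rfl⟩ := hw'
        have hjp : dist (g₃ j) (σ 0) = j := by
          rw [← hg₃.1]
          rw [hg₃.2.2 j hj 0 ⟨le_rfl, dist_nonneg⟩, sub_zero, abs_of_nonneg hj.1]
        have hju : dist (g₃ j) u = dist (σ 0) u - j := by
          conv_lhs => rw [← hg₃.2.1]
          rw [hg₃.2.2 j hj (dist (σ 0) u) ⟨dist_nonneg, le_rfl⟩,
            abs_of_nonpos (by linarith [hj.2]), neg_sub]
        have hT' : dist (σ 0) (σ T) = T := by
          rw [hray 0 (Set.mem_Ici.mpr le_rfl) T (Set.mem_Ici.mpr hT), zero_sub, abs_neg, abs_of_nonneg hT]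
        have h1 : T ≤ j + 2 * δ := by
          have := dist_triangle (σ 0) (g₃ j) (σ T)
          rw [hT'] at this
          rw [dist_comm (σ T) (g₃ j)] at hdσTw'
          rw [dist_comm (g₃ j) (σ 0)] at hjp
          linarith
        have h2 : dist u (σ T) ≤ dist u (g₃ j) + 2 * δ := by
          have := dist_triangle u (g₃ j) (σ T)
          rw [dist_comm (g₃ j) (σ T)] at this
          linarith
        rw [dist_comm (g₃ j) u] at hju
        have : dist u (σ T) ≤ dist u (σ 0) - T + 4 * δ := by
          have hc : dist (σ 0) u = dist u (σ 0) := dist_comm _ _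
          linarith
        calc dist u (σ T) ≤ dist u (σ 0) - T + 4 * δ := this
          _ ≤ max (dist u (σ 0) - T) (B u - B (σ 0) + T) + 4 * δ + ε := by
              have := le_max_left (dist u (σ 0) - T) (B u - B (σ 0) + T); linarith
      · -- w' on the geodesic from γ S to u
        obtain ⟨j, hj, rfl⟩ := hw'
        have hjp : dist (g₄ j) (γ S) = j := by
          rw [← hg₄.1]
          rw [hg₄.2.2 j hj 0 ⟨le_rfl, dist_nonneg⟩, sub_zero, abs_of_nonneg hj.1]
        have hju : dist (g₄ j) u = dist (γ S) u - j := by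
          conv_lhs => rw [← hg₄.2.1]
          rw [hg₄.2.2 j hj (dist (γ S) u) ⟨dist_nonneg, le_rfl⟩,
            abs_of_nonpos (by linarith [hj.2]), neg_sub]
        have h1 : B (σ 0) - T + S ≤ j + 2 * δ := by
          have := dist_triangle (σ T) (g₄ j) (γ S)
          linarith
        have h2 : dist u (σ T) ≤ dist u (g₄ j) + 2 * δ := by
          have := dist_triangle u (g₄ j) (σ T)
          rw [dist_comm (g₄ j) (σ T)] at this
          linarith
        rw [dist_comm (g₄ j) u] at hju
        have hγSu : dist (γ S) u ≤ S + B u + ε := by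
          rw [dist_comm (γ S) u]; exact hSu
        have : dist u (σ T) ≤ B u - B (σ 0) + T + 4 * δ + ε := by linarith
        calc dist u (σ T) ≤ B u - B (σ 0) + T + 4 * δ + ε := this
          _ ≤ max (dist u (σ 0) - T) (B u - B (σ 0) + T) + 4 * δ + ε := by
              have := le_max_right (dist u (σ 0) - T) (B u - B (σ 0) + T); linarith
    · -- w on the geodesic from σ R to γ S : impossible
      exfalso
      obtain ⟨r, hr, rfl⟩ := hw
      have hrp : dist (g₂ r) (σ R) = r := by
        rw [← hg₂.1]
        rw [hg₂.2.2 r hr 0 ⟨le_rfl, dist_nonneg⟩, sub_zero, abs_of_nonneg hr.1]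
      have hrq : dist (g₂ r) (γ S) = dist (σ R) (γ S) - r := by
        conv_lhs => rw [← hg₂.2.1]
        rw [hg₂.2.2 r hr (dist (σ R) (γ S)) ⟨dist_nonneg, le_rfl⟩,
          abs_of_nonpos (by linarith [hr.2]), neg_sub]
      have hTR : dist (σ T) (σ R) = R - T := by
        rw [hray T (Set.mem_Ici.mpr hT) R (Set.mem_Ici.mpr hR0), abs_of_nonpos (by simp [hRdef]; linarith), neg_sub]
      have h1 : R - T ≤ δ + r := by
        have := dist_triangle (σ T) (g₂ r) (σ R)
        linarith
      have h2 : dist (σ T) (γ S) ≤ δ + (dist (σ R) (γ S) - r) := by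
        have := dist_triangle (σ T) (g₂ r) (γ S)
        linarith
      have h4 : dist (σ R) (γ S) ≤ S + B (σ 0) - R + ε := by
        rw [hBσR] at hSR; linarith
      linarith
  -- remove the ε
  refine le_of_forall_pos_le_add fun ε hε => ?_
  have h := main (min ε 1) (lt_min hε one_pos) (min_le_right ε 1)
  have := min_le_left ε 1
  linarith

/-- Lemma 4 ii): Let `X` be a proper geodesic `δ`-hyperbolic space, `B` a Busemann function,
`x,y ∈ X`, `γ_x, γ_y` `B`-rays starting at `x, y`, and `a = (y⬝B)_x`, `b = (x⬝B)_y`.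
Then for all `t ≥ 0` one has `d(γ_x(a+t), γ_y(b+t)) ≤ 8δ`. -/
theorem stmt6 {X : Type*} [MetricSpace X] [ProperSpace X]
    (hgeo : GeodesicMS X) (δ : ℝ) (hδ : 0 ≤ δ) (hhyp : DeltaHyp X δ)
    (B : X → ℝ) (hB : IsBusemann B) (x y : X)
    (γx γy : ℝ → X) (hγx : IsBRay B γx) (hγy : IsBRay B γy)
    (hx0 : γx 0 = x) (hy0 : γy 0 = y) :
    ∀ t : ℝ, 0 ≤ t → dist (γx (gpB B x y + t)) (γy (gpB B y x + t)) ≤ 8 * δ := by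
  intro t ht
  obtain ⟨γ, hγ, hγt⟩ := hB
  set a : ℝ := gpB B x y with hadef
  set b : ℝ := gpB B y x with hbdef
  have hab : a + b = dist x y := by
    simp only [hadef, hbdef, gpB, dist_comm y x]; ring
  have hamb : a - b = B x - B y := by
    simp only [hadef, hbdef, gpB, dist_comm y x]; ring
  have ha0 : 0 ≤ a := by
    have := buse_lip ⟨γ, hγ, hγt⟩ y x
    simp only [hadef, gpB]
    rw [dist_comm y x] at this
    linarith
  have hb0 : 0 ≤ b := by
    have := buse_lip ⟨γ, hγ, hγt⟩ x y
    simp only [hbdef, gpB]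
    rw [dist_comm y x]
    linarith
  have hat : 0 ≤ a + t := by linarith
  have hbt : 0 ≤ b + t := by linarith
  -- first application : distance from y to γx (a+t)
  have h1 := buse_key hgeo hδ hhyp hγ hγt hγx y hat
  rw [hx0] at h1
  have h1' : dist y (γx (a + t)) ≤ b + t + 4 * δ := by
    have e1 : dist y x - (a + t) = b - t := by rw [dist_comm y x]; linarith
    have e2 : B y - B x + (a + t) = b + t := by linarith
    rw [e1, e2] at h1
    have : max (b - t) (b + t) = b + t := max_eq_right (by linarith)
    rw [this] at h1
    exact h1
  -- second application : distance from γx (a+t) to γy (b+t)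
  have h2 := buse_key hgeo hδ hhyp hγ hγt hγy (γx (a + t)) hbt
  rw [hy0] at h2
  have hBγx : B (γx (a + t)) = B x - (a + t) := by
    have := hγx.2 (a + t) (Set.mem_Ici.mpr hat)
    rw [hx0] at this
    exact this
  have e3 : B (γx (a + t)) - B y + (b + t) = 0 := by rw [hBγx]; linarith
  have e4 : dist (γx (a + t)) y - (b + t) ≤ 4 * δ := by
    rw [dist_comm (γx (a + t)) y]; linarith
  have hmax : max (dist (γx (a + t)) y - (b + t)) (B (γx (a + t)) - B y + (b + t)) ≤ 4 * δ :=
    max_le e4 (by rw [e3]; linarith)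
  linarith
end

section
/- (Morse estimate) Let (X,d) be a δ-hyperbolic geodesic metric space with δ > 0, let x,y ∈ X, let γ_{xy} be a geodesic segment from x to y, and let γ : [0,1] → X be a continuous path from x to y. If there exists a point p = γ_{xy}(s₀) on the geodesic segment such that d(p, γ(t)) ≥ R for all t ∈ [0,1], where R > 90δ, then the length of γ satisfies L(γ) ≥ d(x,y) + R²/(20δ). -/
open Set Metric Filter
open scoped ENNReal NNReal

/-- Reversal of a geodesic segment. -/
lemma IsGeodSegment.symm' {X : Type*} [MetricSpace X] {g : ℝ → X} {a b : X}
    (h : IsGeodSegment g a b) : IsGeodSegment (fun s => g (dist a b - s)) b a := by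
  obtain ⟨h0, h1, hd⟩ := h
  refine ⟨by simpa using h1, by simp [dist_comm b a, h0], ?_⟩
  intro s hs t ht
  rw [dist_comm b a] at hs ht
  rw [hd (dist a b - s) ⟨by linarith [hs.2], by linarith [hs.1]⟩
      (dist a b - t) ⟨by linarith [ht.2], by linarith [ht.1]⟩]
  rw [abs_sub_comm]
  ring_nf

/-- Key subdivision estimate for the Morse lemma. -/
lemma morse_key {X : Type*} [MetricSpace X] (δ : ℝ) (hδ : 0 < δ)
    (hgeo : GeodesicMS X) (hhyp : DeltaHyp X δ)
    (γ : ℝ → X) (hγcont : ContinuousOn γ (Set.Icc 0 1))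
    (p : X) (R : ℝ) (hR : 90 * δ < R)
    (hfar : ∀ t ∈ Set.Icc (0 : ℝ) 1, R ≤ dist p (γ t)) :
    ∀ n : ℕ, ∀ α ω : ℝ, α ≤ ω → 0 ≤ α → ω ≤ 1 →
      ∀ g : ℝ → X, IsGeodSegment g (γ α) (γ ω) →
      ∀ σ ∈ Set.Icc (0 : ℝ) (dist (γ α) (γ ω)),
      dist p (g σ) + n * δ ≤ R / 10 →
      ENNReal.ofReal (dist (γ α) (γ ω) + n * (9 * R / 5 - 4 * δ)) ≤
        eVariationOn γ (Set.Icc α ω) := by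
  intro n
  induction n with
  | zero =>
    intro α ω hαω hα hω g hg σ hσ hcond
    have h1 : edist (γ α) (γ ω) ≤ eVariationOn γ (Set.Icc α ω) :=
      eVariationOn.edist_le γ ⟨le_refl α, hαω⟩ ⟨hαω, le_refl ω⟩
    rw [edist_dist] at h1
    simpa using h1
  | succ n IH =>
    intro α ω hαω hα hω g hg σ hσ hcond
    have hsub : Set.Icc α ω ⊆ Set.Icc (0 : ℝ) 1 := Set.Icc_subset_Icc hα hω
    have hn0 : (0:ℝ) ≤ (n : ℝ) := Nat.cast_nonneg n
    have hcond' : dist p (g σ) + ((n : ℝ) + 1) * δ ≤ R / 10 := by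
      push_cast at hcond; linarith
    have hpσ : dist p (g σ) ≤ R / 10 - δ := by nlinarith
    have far' : ∀ t ∈ Set.Icc α ω, 9 * R / 10 ≤ dist (g σ) (γ t) := by
      intro t ht
      have h1 := hfar t (hsub ht)
      have h2 := dist_triangle p (g σ) (γ t)
      linarith
    obtain ⟨hg0, hg1, hgd⟩ := hg
    have hσα : dist (γ α) (g σ) = σ := by
      have h := hgd 0 ⟨le_refl 0, dist_nonneg⟩ σ hσ
      rw [hg0, dist_comm] at h
      rw [dist_comm, h, abs_sub_comm, abs_of_nonneg (by linarith [hσ.1])]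
      ring
    have hσω : dist (γ ω) (g σ) = dist (γ α) (γ ω) - σ := by
      have h := hgd σ hσ (dist (γ α) (γ ω)) ⟨dist_nonneg, le_refl _⟩
      rw [hg1] at h
      rw [dist_comm, h, abs_of_nonpos (by linarith [hσ.2]), neg_sub]
    -- coverage : every t lies in A or B
    have cover : ∀ t ∈ Set.Icc α ω,
        dist (γ α) (g σ) + 9 * R / 10 - 2 * δ ≤ dist (γ α) (γ t) ∨
        dist (γ ω) (g σ) + 9 * R / 10 - 2 * δ ≤ dist (γ ω) (γ t) := by
      intro t ht
      obtain ⟨g1, hg1'⟩ := hgeo (γ α) (γ t)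
      obtain ⟨g2, hg2'⟩ := hgeo (γ ω) (γ t)
      obtain ⟨w, hw, hwd⟩ := hhyp (γ α) (γ ω) (γ t) g g1 g2 ⟨hg0, hg1, hgd⟩ hg1' hg2' σ hσ
      rcases hw with hw | hw
      · left
        obtain ⟨τ, hτ, rfl⟩ := hw
        obtain ⟨k0, k1, kd⟩ := hg1'
        have e1 : dist (γ α) (g1 τ) = τ := by
          have h := kd 0 ⟨le_refl 0, dist_nonneg⟩ τ hτ
          rw [k0, dist_comm] at h
          rw [dist_comm, h, abs_sub_comm, abs_of_nonneg (by linarith [hτ.1])]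
          ring
        have e2 : dist (g1 τ) (γ t) = dist (γ α) (γ t) - τ := by
          have h := kd τ hτ (dist (γ α) (γ t)) ⟨dist_nonneg, le_refl _⟩
          rw [k1] at h
          rw [h, abs_of_nonpos (by linarith [hτ.2]), neg_sub]
        have e3 : 9 * R / 10 ≤ dist (g σ) (γ t) := far' t ht
        have e4 := dist_triangle (γ α) (g1 τ) (g σ)
        rw [dist_comm (g1 τ) (g σ)] at e4
        have e5 := dist_triangle (g σ) (g1 τ) (γ t)
        linarith
      · right
        obtain ⟨τ, hτ, rfl⟩ := hw
        obtain ⟨k0, k1, kd⟩ := hg2'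
        have e1 : dist (γ ω) (g2 τ) = τ := by
          have h := kd 0 ⟨le_refl 0, dist_nonneg⟩ τ hτ
          rw [k0, dist_comm] at h
          rw [dist_comm, h, abs_sub_comm, abs_of_nonneg (by linarith [hτ.1])]
          ring
        have e2 : dist (g2 τ) (γ t) = dist (γ ω) (γ t) - τ := by
          have h := kd τ hτ (dist (γ ω) (γ t)) ⟨dist_nonneg, le_refl _⟩
          rw [k1] at h
          rw [h, abs_of_nonpos (by linarith [hτ.2]), neg_sub]
        have e3 : 9 * R / 10 ≤ dist (g σ) (γ t) := far' t ht
        have e4 := dist_triangle (γ ω) (g2 τ) (g σ)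
        rw [dist_comm (g2 τ) (g σ)] at e4
        have e5 := dist_triangle (g σ) (g2 τ) (γ t)
        linarith
    -- intermediate value argument finds t* deep for both endpoints
    set W : ℝ → ℝ := fun t => dist (γ α) (γ t) - dist (γ ω) (γ t)
        - (dist (γ α) (g σ) - dist (γ ω) (g σ)) with hWdef
    have hWcont : ContinuousOn W (Set.Icc α ω) := by
      apply ContinuousOn.sub _ continuousOn_const
      exact ((continuous_const.dist continuous_id).comp_continuousOn
          (hγcont.mono hsub)).sub
        ((continuous_const.dist continuous_id).comp_continuousOn (hγcont.mono hsub))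
    have hRδ : 2 * δ < 9 * R / 10 := by linarith
    have hWα : W α ≤ 0 := by
      have hcovα := cover α ⟨le_refl α, hαω⟩
      have hvα : dist (γ ω) (g σ) + 9 * R / 10 - 2 * δ ≤ dist (γ ω) (γ α) := by
        rcases hcovα with h | h
        · exfalso
          rw [dist_self] at h
          have := dist_nonneg (x := γ α) (y := g σ)
          linarith
        · exact h
      simp only [hWdef, dist_self]
      have := dist_nonneg (x := γ α) (y := g σ)
      linarith
    have hWω : 0 ≤ W ω := by
      have hcovω := cover ω ⟨hαω, le_refl ω⟩
      have huω : dist (γ α) (g σ) + 9 * R / 10 - 2 * δ ≤ dist (γ α) (γ ω) := by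
        rcases hcovω with h | h
        · exact h
        · exfalso
          rw [dist_self] at h
          have := dist_nonneg (x := γ ω) (y := g σ)
          linarith
      simp only [hWdef, dist_self]
      have := dist_nonneg (x := γ ω) (y := g σ)
      linarith
    have hmem : (0:ℝ) ∈ Set.Icc (W α) (W ω) := ⟨hWα, hWω⟩
    obtain ⟨ts, hts, hWts⟩ := intermediate_value_Icc hαω hWcont hmem
    -- at t = ts both deep inequalities hold
    have hdeep : dist (γ α) (g σ) + 9 * R / 10 - 2 * δ ≤ dist (γ α) (γ ts) ∧
        dist (γ ω) (g σ) + 9 * R / 10 - 2 * δ ≤ dist (γ ω) (γ ts) := by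
      have hc := cover ts hts
      have hW0 : dist (γ α) (γ ts) - dist (γ ω) (γ ts)
          - (dist (γ α) (g σ) - dist (γ ω) (g σ)) = 0 := hWts
      constructor
      · rcases hc with h | h
        · exact h
        · linarith
      · rcases hc with h | h
        · linarith
        · exact h
    -- split the variation at ts
    have hsplit : eVariationOn γ (Set.Icc α ts) + eVariationOn γ (Set.Icc ts ω) =
        eVariationOn γ (Set.Icc α ω) := by
      have h := eVariationOn.Icc_add_Icc γ (s := Set.univ) hts.1 hts.2 (Set.mem_univ ts)
      simpa using h
    -- thinness once more, at ts, to find which side to recurse into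
    obtain ⟨g1, hg1'⟩ := hgeo (γ α) (γ ts)
    obtain ⟨g2, hg2'⟩ := hgeo (γ ω) (γ ts)
    obtain ⟨w, hw, hwd⟩ := hhyp (γ α) (γ ω) (γ ts) g g1 g2 ⟨hg0, hg1, hgd⟩ hg1' hg2' σ hσ
    have key_sum : dist (γ α) (γ ω) + (9 * R / 5 - 4 * δ) ≤
        dist (γ α) (γ ts) + dist (γ ts) (γ ω) := by
      rw [dist_comm (γ ts) (γ ω)]
      linarith [hdeep.1, hdeep.2, hσα, hσω]
    rcases hw with hw | hw
    · -- recurse on [α, ts]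
      obtain ⟨τ, hτ, rfl⟩ := hw
      have hcd : dist p (g1 τ) + (n : ℝ) * δ ≤ R / 10 := by
        have := dist_triangle p (g σ) (g1 τ)
        linarith
      have hIH := IH α ts hts.1 hα (le_trans hts.2 hω) g1 hg1' τ hτ hcd
      have h2 : ENNReal.ofReal (dist (γ ts) (γ ω)) ≤ eVariationOn γ (Set.Icc ts ω) := by
        have hm1 : ts ∈ Set.Icc ts ω := ⟨le_refl ts, hts.2⟩
        have hm2 : ω ∈ Set.Icc ts ω := ⟨hts.2, le_refl ω⟩
        have h := eVariationOn.edist_le γ hm1 hm2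
        rwa [edist_dist] at h
      calc ENNReal.ofReal (dist (γ α) (γ ω) + (↑(n + 1)) * (9 * R / 5 - 4 * δ))
          ≤ ENNReal.ofReal ((dist (γ α) (γ ts) + (n : ℝ) * (9 * R / 5 - 4 * δ))
            + dist (γ ts) (γ ω)) := by
            apply ENNReal.ofReal_le_ofReal
            push_cast
            linarith [key_sum]
        _ ≤ ENNReal.ofReal (dist (γ α) (γ ts) + (n : ℝ) * (9 * R / 5 - 4 * δ))
            + ENNReal.ofReal (dist (γ ts) (γ ω)) := ENNReal.ofReal_add_le
        _ ≤ eVariationOn γ (Set.Icc α ts) + eVariationOn γ (Set.Icc ts ω) :=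
            add_le_add hIH h2
        _ = eVariationOn γ (Set.Icc α ω) := hsplit
    · -- recurse on [ts, ω]
      obtain ⟨τ, hτ, rfl⟩ := hw
      have hg2s : IsGeodSegment (fun s => g2 (dist (γ ω) (γ ts) - s)) (γ ts) (γ ω) :=
        hg2'.symm'
      have hτ' : dist (γ ω) (γ ts) - τ ∈ Set.Icc (0:ℝ) (dist (γ ts) (γ ω)) := by
        rw [dist_comm (γ ts) (γ ω)]
        exact ⟨by linarith [hτ.2], by linarith [hτ.1]⟩
      have heq : (fun s => g2 (dist (γ ω) (γ ts) - s)) (dist (γ ω) (γ ts) - τ) = g2 τ := by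
        simp
      have hcd : dist p ((fun s => g2 (dist (γ ω) (γ ts) - s)) (dist (γ ω) (γ ts) - τ))
          + (n : ℝ) * δ ≤ R / 10 := by
        rw [heq]
        have := dist_triangle p (g σ) (g2 τ)
        linarith
      have hIH := IH ts ω hts.2 (le_trans hα hts.1) hω _ hg2s _ hτ' hcd
      have h2 : ENNReal.ofReal (dist (γ α) (γ ts)) ≤ eVariationOn γ (Set.Icc α ts) := by
        have hm1 : α ∈ Set.Icc α ts := ⟨le_refl α, hts.1⟩
        have hm2 : ts ∈ Set.Icc α ts := ⟨hts.1, le_refl ts⟩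
        have h := eVariationOn.edist_le γ hm1 hm2
        rwa [edist_dist] at h
      calc ENNReal.ofReal (dist (γ α) (γ ω) + (↑(n + 1)) * (9 * R / 5 - 4 * δ))
          ≤ ENNReal.ofReal (dist (γ α) (γ ts)
            + (dist (γ ts) (γ ω) + (n : ℝ) * (9 * R / 5 - 4 * δ))) := by
            apply ENNReal.ofReal_le_ofReal
            push_cast
            linarith [key_sum]
        _ ≤ ENNReal.ofReal (dist (γ α) (γ ts))
            + ENNReal.ofReal (dist (γ ts) (γ ω) + (n : ℝ) * (9 * R / 5 - 4 * δ)) :=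
            ENNReal.ofReal_add_le
        _ ≤ eVariationOn γ (Set.Icc α ts) + eVariationOn γ (Set.Icc ts ω) :=
            add_le_add h2 hIH
        _ = eVariationOn γ (Set.Icc α ω) := hsplit

/-- Lemma 6 (Morse estimate): Let `(X,d)` be `δ`-hyperbolic geodesic with `δ > 0`,
`x,y ∈ X`, `γ_{xy}` a geodesic segment from `x` to `y`, and `γ : [0,1] → X` a continuous
path from `x` to `y`.  If `p = γ_{xy}(s₀)` satisfies `d(p,γ(t)) ≥ R` for all `t ∈ [0,1]`
with `R > 90δ`, then `L(γ) ≥ d(x,y) + R²/(20δ)`. -/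
theorem stmt8 {X : Type*} [MetricSpace X] (δ : ℝ) (hδ : 0 < δ)
    (hgeo : GeodesicMS X) (hhyp : DeltaHyp X δ)
    (x y : X) (gxy : ℝ → X) (hgxy : IsGeodSegment gxy x y)
    (γ : ℝ → X) (hγcont : ContinuousOn γ (Set.Icc 0 1)) (hγ0 : γ 0 = x) (hγ1 : γ 1 = y)
    (s₀ R : ℝ) (hs₀ : s₀ ∈ Set.Icc (0 : ℝ) (dist x y)) (hR : 90 * δ < R)
    (hfar : ∀ t ∈ Set.Icc (0 : ℝ) 1, R ≤ dist (gxy s₀) (γ t)) :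
    ENNReal.ofReal (dist x y + R ^ 2 / (20 * δ)) ≤ eVariationOn γ (Set.Icc 0 1) := by
  have hRpos : 0 < R := by linarith
  set n : ℕ := ⌈R / (20 * δ)⌉₊ with hn
  have hnle : (n : ℝ) < R / (20 * δ) + 1 :=
    Nat.ceil_lt_add_one (by positivity)
  have hnge : R / (20 * δ) ≤ (n : ℝ) := Nat.le_ceil _
  have hdivmul : R / (20 * δ) * δ = R / 20 := by
    field_simp
  have hg' : IsGeodSegment gxy (γ 0) (γ 1) := by rw [hγ0, hγ1]; exact hgxy
  have hs₀' : s₀ ∈ Set.Icc (0:ℝ) (dist (γ 0) (γ 1)) := by rw [hγ0, hγ1]; exact hs₀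
  have hfar' : ∀ t ∈ Set.Icc (0:ℝ) 1, R ≤ dist (gxy s₀) (γ t) := hfar
  have hcond : dist (gxy s₀) (gxy s₀) + (n : ℝ) * δ ≤ R / 10 := by
    rw [dist_self]
    have h1 : (n : ℝ) * δ < (R / (20 * δ) + 1) * δ := by
      apply mul_lt_mul_of_pos_right hnle hδ
    rw [add_mul, hdivmul, one_mul] at h1
    linarith
  have hkey := morse_key δ hδ hgeo hhyp γ hγcont (gxy s₀) R hR hfar' n 0 1
    (by norm_num) (le_refl 0) (le_refl 1) gxy hg' s₀ hs₀' hcond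
  refine le_trans ?_ hkey
  apply ENNReal.ofReal_le_ofReal
  rw [hγ0, hγ1]
  have hGR : R ≤ 9 * R / 5 - 4 * δ := by linarith
  have h1 : R / (20 * δ) * R ≤ (n : ℝ) * (9 * R / 5 - 4 * δ) :=
    mul_le_mul hnge hGR (le_of_lt hRpos) (Nat.cast_nonneg n)
  have h2 : R / (20 * δ) * R = R ^ 2 / (20 * δ) := by
    field_simp
  linarith
end

section
/- For any two points p, p' ∈ Y there exists a continuous path in Y from p to p' whose length with respect to the maximum metric d_m is at most d_m(p,p') + 20δ. -/
open Set Metric Filter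
open scoped ENNReal NNReal

section
variable {X : Type*} [MetricSpace X]

theorem IsGeodSegment.symm'_s9 {γ : ℝ → X} {x y : X}
    (h : IsGeodSegment γ x y) : IsGeodSegment (fun t => γ (dist x y - t)) y x := by
  obtain ⟨h0, h1, hd⟩ := h
  have hc : dist y x = dist x y := dist_comm y x
  refine ⟨by simpa using h1, by simp [hc, h0], ?_⟩
  intro s hs t ht
  rw [hc] at hs ht
  rw [hd _ ⟨by linarith [hs.2], by linarith [hs.1]⟩ _ ⟨by linarith [ht.2], by linarith [ht.1]⟩]
  rw [abs_sub_comm]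
  ring_nf

theorem geod_param {γ : ℝ → X} {x y : X} (h : IsGeodSegment γ x y) {u : ℝ}
    (hu : u ∈ Set.Icc 0 (dist x y)) :
    dist x (γ u) = u ∧ dist (γ u) y = dist x y - u := by
  obtain ⟨h0, h1, hd⟩ := h
  constructor
  · have := hd 0 ⟨le_rfl, dist_nonneg⟩ u hu
    rw [h0] at this
    rw [this, abs_sub_comm, abs_of_nonneg (by simpa using hu.1)]
    simp
  · have := hd u hu (dist x y) ⟨dist_nonneg, le_rfl⟩
    rw [h1] at this
    rw [this, abs_of_nonpos (by linarith [hu.2])]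
    ring


theorem segImg_symm' {γ : ℝ → X} {x y : X} :
    segImg (fun t => γ (dist x y - t)) y x = segImg γ x y := by
  unfold segImg
  rw [dist_comm y x]
  ext q
  constructor
  · rintro ⟨u, hu, rfl⟩
    exact ⟨dist x y - u, ⟨by linarith [hu.2], by linarith [hu.1]⟩, rfl⟩
  · rintro ⟨u, hu, rfl⟩
    refine ⟨dist x y - u, ⟨by linarith [hu.2], by linarith [hu.1]⟩, ?_⟩
    simp

theorem seg_dist {g : ℝ → X} {x y : X} (h : IsGeodSegment g x y) {q : X}
    (hq : q ∈ segImg g x y) : 0 ≤ dist x q ∧ dist x q + dist q y = dist x y := by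
  obtain ⟨u, hu, rfl⟩ := hq
  have h1 := geod_param h hu
  exact ⟨by rw [h1.1]; exact hu.1, by rw [h1.1, h1.2]; ring⟩

theorem seg_pair {g : ℝ → X} {x y : X} (h : IsGeodSegment g x y) {q q' : X}
    (hq : q ∈ segImg g x y) (hq' : q' ∈ segImg g x y) :
    dist q q' = |dist x q - dist x q'| := by
  obtain ⟨u, hu, rfl⟩ := hq
  obtain ⟨u', hu', rfl⟩ := hq'
  rw [(geod_param h hu).1, (geod_param h hu').1]
  exact h.2.2 u hu u' hu'

/-- The bridge lemma. -/
theorem bridge_lemma (hgeo : GeodesicMS X) {δ : ℝ} (hδ : 0 ≤ δ)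
    (hhyp : DeltaHyp X δ) {B : X → ℝ} (hB : IsBusemann B)
    (x y z z' : X) (v : ℝ)
    (hzv : B z = v) (hz'v : B z' = v)
    (hxz : dist x z = B x - v) (hyz' : dist y z' = B y - v)
    (hk : v ≤ (B x + B y - dist x y) / 2) :
    dist z z' ≤ 6 * δ ∨
      (dist z z' ≤ 10 * δ ∧ (B x + B y - dist x y) / 2 ≤ v + δ) := by
  obtain ⟨γ, hray, htend⟩ := hB
  set a := B x with ha
  set b := B y with hb
  set L := dist x y with hL
  set k := (a + b - L) / 2 with hkdef
  have hav : 0 ≤ a - v := hxz ▸ dist_nonneg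
  have hbv : 0 ≤ b - v := hyz' ▸ dist_nonneg
  have main : ∀ ε : ℝ, 0 < ε →
      dist z z' ≤ 6 * δ + 6 * ε ∨ (dist z z' ≤ 10 * δ + 6 * ε ∧ k ≤ v + δ + ε) := by
    intro ε hε
    have hev : ∀ u : X, ∀ᶠ t in atTop, |dist u (γ t) - t - B u| ≤ ε := by
      intro u
      have h0 := (htend u).eventually (Metric.closedBall_mem_nhds (B u) hε)
      filter_upwards [h0] with t ht
      rw [Real.dist_eq] at ht
      exact ht
    have hbig : ∀ u : X, ∀ c : ℝ, ∀ᶠ t in atTop, c ≤ dist u (γ t) := by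
      intro u c
      have h1 : Tendsto (fun t => (dist u (γ t) - t) + t) atTop atTop :=
        (htend u).add_atTop tendsto_id
      have h2 : Tendsto (fun t => dist u (γ t)) atTop atTop :=
        h1.congr fun t => by ring
      exact h2.eventually_ge_atTop c
    obtain ⟨t, hta, htb, htz, htz', hA1, hY1⟩ :=
      ((hev x).and ((hev y).and ((hev z).and ((hev z').and
        ((hbig x (a - v)).and (hbig y (b - v))))))).exists
    set w := γ t with hw
    rw [← ha] at hta
    rw [← hb] at htb
    rw [hzv] at htz
    rw [hz'v] at htz'
    obtain ⟨hta1, hta2⟩ := abs_le.1 hta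
    obtain ⟨htb1, htb2⟩ := abs_le.1 htb
    obtain ⟨htz1, htz2⟩ := abs_le.1 htz
    obtain ⟨htz'1, htz'2⟩ := abs_le.1 htz'
    obtain ⟨gx, hgx⟩ := hgeo x w
    obtain ⟨gy, hgy⟩ := hgeo y w
    obtain ⟨gxy, hgxy⟩ := hgeo x y
    obtain ⟨gxz, hgxz⟩ := hgeo x z
    obtain ⟨gyz', hgyz'⟩ := hgeo y z'
    obtain ⟨gzw, hgzw⟩ := hgeo z w
    obtain ⟨gz'w, hgz'w⟩ := hgeo z' w
    have hgwz := hgzw.symm'_s9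
    have hgwz' := hgz'w.symm'_s9
    have hgwy := hgy.symm'_s9
    have hgwx := hgx.symm'_s9
    have hgyx := hgxy.symm'_s9
    set p := gx (a - v) with hp
    set p' := gy (b - v) with hp'
    have hpmem : (a - v) ∈ Set.Icc (0:ℝ) (dist x w) := ⟨hav, hA1⟩
    have hp'mem : (b - v) ∈ Set.Icc (0:ℝ) (dist y w) := ⟨hbv, hY1⟩
    have hpseg : p ∈ segImg gx x w := ⟨a - v, hpmem, rfl⟩
    have hp'seg : p' ∈ segImg gy y w := ⟨b - v, hp'mem, rfl⟩
    have hxp : dist x p = a - v := (geod_param hgx hpmem).1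
    have hpw : dist p w = dist x w - (a - v) := (geod_param hgx hpmem).2
    have hyp' : dist y p' = b - v := (geod_param hgy hp'mem).1
    have hp'w : dist p' w = dist y w - (b - v) := (geod_param hgy hp'mem).2
    -- Step 1 : dist z p ≤ 2δ + 2ε
    have step1 : dist z p ≤ 2 * δ + 2 * ε := by
      obtain ⟨q, hq, hdpq⟩ :=
        hhyp x w z gx gxz (fun s => gzw (dist z w - s)) hgx hgxz hgwz (a - v) hpmem
      rw [← hp] at hdpq
      rcases hq with hq | hq
      · obtain ⟨hq0, hq1⟩ := seg_dist hgxz hq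
        have t1 : dist x p ≤ dist x q + dist q p := dist_triangle _ _ _
        have t2 : dist z p ≤ dist z q + dist q p := dist_triangle _ _ _
        have c1 : dist q p = dist p q := dist_comm _ _
        have c2 : dist z q = dist q z := dist_comm _ _
        rw [hxz] at hq1
        linarith
      · obtain ⟨hq0, hq1⟩ := seg_dist hgwz hq
        have t1 : dist w p ≤ dist w q + dist q p := dist_triangle _ _ _
        have t2 : dist z p ≤ dist z q + dist q p := dist_triangle _ _ _
        have c1 : dist q p = dist p q := dist_comm _ _
        have c2 : dist z q = dist q z := dist_comm _ _
        have c3 : dist w p = dist p w := dist_comm _ _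
        have c4 : dist w z = dist z w := dist_comm _ _
        rw [c4] at hq1
        linarith
    -- Step 2 : dist z' p' ≤ 2δ + 2ε
    have step2 : dist z' p' ≤ 2 * δ + 2 * ε := by
      obtain ⟨q, hq, hdpq⟩ :=
        hhyp y w z' gy gyz' (fun s => gz'w (dist z' w - s)) hgy hgyz' hgwz' (b - v) hp'mem
      rw [← hp'] at hdpq
      rcases hq with hq | hq
      · obtain ⟨hq0, hq1⟩ := seg_dist hgyz' hq
        have t1 : dist y p' ≤ dist y q + dist q p' := dist_triangle _ _ _
        have t2 : dist z' p' ≤ dist z' q + dist q p' := dist_triangle _ _ _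
        have c1 : dist q p' = dist p' q := dist_comm _ _
        have c2 : dist z' q = dist q z' := dist_comm _ _
        rw [hyz'] at hq1
        linarith
      · obtain ⟨hq0, hq1⟩ := seg_dist hgwz' hq
        have t1 : dist w p' ≤ dist w q + dist q p' := dist_triangle _ _ _
        have t2 : dist z' p' ≤ dist z' q + dist q p' := dist_triangle _ _ _
        have c1 : dist q p' = dist p' q := dist_comm _ _
        have c2 : dist z' q = dist q z' := dist_comm _ _
        have c3 : dist w p' = dist p' w := dist_comm _ _
        have c4 : dist w z' = dist z' w := dist_comm _ _
        rw [c4] at hq1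
        linarith
    -- Step 3 : triangle (x, w, y) at p
    have step3 : dist p p' ≤ 2 * δ + 2 * ε ∨
        (k ≤ v + δ + ε ∧ ∃ q ∈ segImg gxy x y, dist p q ≤ δ ∧
          a - v - δ ≤ dist x q ∧ dist x q ≤ a - v + δ) := by
      obtain ⟨q, hq, hdpq⟩ :=
        hhyp x w y gx gxy (fun s => gy (dist y w - s)) hgx hgxy hgwy (a - v) hpmem
      rw [← hp] at hdpq
      rcases hq with hq | hq
      · -- q on [x,y] : case II
        right
        obtain ⟨hq0, hq1⟩ := seg_dist hgxy hq
        have t1 : dist x p ≤ dist x q + dist q p := dist_triangle _ _ _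
        have t2 : dist x q ≤ dist x p + dist p q := dist_triangle _ _ _
        have t3 : dist q w ≤ dist q p + dist p w := dist_triangle _ _ _
        have t4 : dist y w ≤ dist y q + dist q w := dist_triangle _ _ _
        have c1 : dist q p = dist p q := dist_comm _ _
        have c2 : dist y q = dist q y := dist_comm _ _
        refine ⟨by linarith, q, hq, hdpq, by linarith, by linarith⟩
      · -- q on [w,y] : case I
        left
        rw [segImg_symm'] at hq
        obtain ⟨hq0, hq1⟩ := seg_dist hgy hq
        have hpair : dist q p' = |dist y q - dist y p'| := by
          rw [dist_comm q p']
          rw [seg_pair hgy hp'seg hq]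
          rw [abs_sub_comm]
        have t1 : dist w p ≤ dist w q + dist q p := dist_triangle _ _ _
        have t2 : dist y p ≤ dist y q + dist q p := dist_triangle _ _ _
        have t3 : dist y w ≤ dist y p + dist p w := dist_triangle _ _ _
        have t4 : dist p p' ≤ dist p q + dist q p' := dist_triangle _ _ _
        have c1 : dist q p = dist p q := dist_comm _ _
        have c2 : dist w q = dist q w := dist_comm _ _
        have c3 : dist w p = dist p w := dist_comm _ _
        have habs : |dist y q - dist y p'| ≤ δ + 2 * ε := by
          rw [hyp', abs_le]
          constructor <;> linarith
        linarith [hpair, habs]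
    -- Step 4 : triangle (y, w, x) at p'
    have step4 : dist p p' ≤ 2 * δ + 2 * ε ∨
        (∃ q ∈ segImg gxy x y, dist p' q ≤ δ ∧
          b - v - δ ≤ dist y q ∧ dist y q ≤ b - v + δ) := by
      obtain ⟨q, hq, hdpq⟩ :=
        hhyp y w x gy (fun s => gxy (dist x y - s)) (fun s => gx (dist x w - s))
          hgy hgyx hgwx (b - v) hp'mem
      rw [← hp'] at hdpq
      rcases hq with hq | hq
      · -- q on [y,x] : case II'
        right
        rw [segImg_symm'] at hq
        obtain ⟨hqq0, hqq1⟩ := seg_dist hgxy hq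
        have hyq : 0 ≤ dist q y := dist_nonneg
        have t1 : dist y p' ≤ dist y q + dist q p' := dist_triangle _ _ _
        have t2 : dist y q ≤ dist y p' + dist p' q := dist_triangle _ _ _
        have c1 : dist q p' = dist p' q := dist_comm _ _
        have c2 : dist y q = dist q y := dist_comm _ _
        refine ⟨q, hq, hdpq, by linarith, by linarith⟩
      · -- q on [w,x] : case I'
        left
        rw [segImg_symm'] at hq
        obtain ⟨hq0, hq1⟩ := seg_dist hgx hq
        have hpair : dist q p = |dist x q - dist x p| := by
          rw [dist_comm q p]
          rw [seg_pair hgx hpseg hq]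
          rw [abs_sub_comm]
        have t1 : dist w p' ≤ dist w q + dist q p' := dist_triangle _ _ _
        have t2 : dist x p' ≤ dist x q + dist q p' := dist_triangle _ _ _
        have t3 : dist x w ≤ dist x p' + dist p' w := dist_triangle _ _ _
        have t4 : dist p p' ≤ dist p q + dist q p' := dist_triangle _ _ _
        have c1 : dist q p' = dist p' q := dist_comm _ _
        have c2 : dist w q = dist q w := dist_comm _ _
        have c3 : dist w p' = dist p' w := dist_comm _ _
        have c5 : dist p q = dist q p := dist_comm _ _
        have habs : |dist x q - dist x p| ≤ δ + 2 * ε := by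
          rw [hxp, abs_le]
          constructor <;> linarith
        linarith [hpair, habs]
    -- combine
    have tri : dist z z' ≤ dist z p + dist p p' + dist p' z' :=
      (dist_triangle4 z p p' z')
    have c0 : dist p' z' = dist z' p' := dist_comm _ _
    rcases step3 with h3 | ⟨hkv, q, hq, hpq, hxq1, hxq2⟩
    · left; linarith
    rcases step4 with h4 | ⟨q', hq', hp'q', hyq1, hyq2⟩
    · left; linarith
    right
    refine ⟨?_, hkv⟩
    have hqq' : dist q q' = |dist x q - dist x q'| := seg_pair hgxy hq hq'
    have hsum : dist x q' + dist q' y = L := (seg_dist hgxy hq').2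
    have hyq' : dist q' y = dist y q' := dist_comm _ _
    have habs2 : |dist x q - dist x q'| ≤ 2 * (k - v) + 2 * δ := by
      rw [hyq'] at hsum
      have hsum' : dist x q' = L - dist y q' := by linarith
      rw [abs_le]
      constructor
      · rw [hsum']
        have hkk : k = (a + b - L) / 2 := hkdef
        linarith [hxq1, hyq1, hk]
      · rw [hsum']
        have hkk : k = (a + b - L) / 2 := hkdef
        linarith [hxq2, hyq2, hk]
    have tpp' : dist p p' ≤ dist p q + dist q q' + dist q' p' := dist_triangle4 _ _ _ _
    have cq : dist q' p' = dist p' q' := dist_comm _ _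
    have hkv' : k - v ≤ δ + ε := by linarith
    linarith [hqq', habs2, tpp', step1, step2]
  -- conclude from the per-ε estimate
  by_cases h6 : dist z z' ≤ 6 * δ
  · exact Or.inl h6
  push_neg at h6
  have hall : ∀ ε : ℝ, 0 < ε → ε < (dist z z' - 6 * δ) / 6 →
      dist z z' ≤ 10 * δ + 6 * ε ∧ k ≤ v + δ + ε := by
    intro ε h1 h2
    rcases main ε h1 with h | h
    · exfalso; linarith
    · exact h
  have hpos : 0 < (dist z z' - 6 * δ) / 6 := by linarith
  right
  constructor
  · refine le_of_forall_pos_le_add ?_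
    intro η hη
    set ε := min (η / 6) ((dist z z' - 6 * δ) / 12) with hεdef
    have hε1 : 0 < ε := lt_min (by linarith) (by linarith)
    have hε2 : ε < (dist z z' - 6 * δ) / 6 := lt_of_le_of_lt (min_le_right _ _) (by linarith)
    have := (hall ε hε1 hε2).1
    have : 6 * ε ≤ η := by
      have := min_le_left (η / 6) ((dist z z' - 6 * δ) / 12)
      have hε3 : ε ≤ η / 6 := by rw [hεdef]; exact this
      linarith
    linarith [(hall ε hε1 hε2).1]
  · refine le_of_forall_pos_le_add ?_
    intro η hη
    set ε := min η ((dist z z' - 6 * δ) / 12) with hεdef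
    have hε1 : 0 < ε := lt_min hη (by linarith)
    have hε2 : ε < (dist z z' - 6 * δ) / 6 := lt_of_le_of_lt (min_le_right _ _) (by linarith)
    have hε3 : ε ≤ η := min_le_left _ _
    linarith [(hall ε hε1 hε2).2]

theorem busemann_lip {B : X → ℝ} (hB : IsBusemann B) (u w : X) : B u ≤ B w + dist u w := by
  obtain ⟨γ, -, ht⟩ := hB
  have h2 : Filter.Tendsto (fun t => dist w (γ t) - t + dist u w) atTop (nhds (B w + dist u w)) :=
    (ht w).add tendsto_const_nhds
  refine le_of_tendsto_of_tendsto (ht u) h2 ?_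
  filter_upwards [] with t
  have := dist_triangle u w (γ t)
  linarith

theorem busemann_dist_le {B : X → ℝ} (hB : IsBusemann B) (u w : X) :
    |B u - B w| ≤ dist u w := by
  rw [abs_sub_le_iff]
  constructor
  · linarith [busemann_lip hB u w]
  · linarith [busemann_lip hB w u, dist_comm u w]

theorem ray_dist {g : ℝ → X} (h : IsRay g) {s t : ℝ} (hs : 0 ≤ s) (ht : 0 ≤ t) :
    dist (g s) (g t) = |s - t| := h s (Set.mem_Ici.mpr hs) t (Set.mem_Ici.mpr ht)

theorem busemann_ray [ProperSpace X] (hgeo : GeodesicMS X) {B : X → ℝ} (hB : IsBusemann B)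
    (x : X) : ∃ r : ℝ → X, r 0 = x ∧ IsRay r ∧ ∀ s ∈ Set.Ici (0:ℝ), B (r s) = B x - s := by
  obtain ⟨γ, hray, htend⟩ := hB
  -- B is continuous
  have hlip : LipschitzWith 1 B := by
    apply LipschitzWith.of_dist_le_mul
    intro a b
    rw [Real.dist_eq, NNReal.coe_one, one_mul, abs_sub_le_iff]
    constructor
    · linarith [busemann_lip ⟨γ, hray, htend⟩ a b]
    · linarith [busemann_lip ⟨γ, hray, htend⟩ b a, dist_comm a b]
  have hBγ : ∀ u : ℝ, 0 ≤ u → B (γ u) = B (γ 0) - u := by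
    intro u hu
    have h1 : Tendsto (fun t => dist (γ u) (γ t) - t) atTop (nhds (B (γ u))) := htend (γ u)
    have h2 : Tendsto (fun t => dist (γ 0) (γ t) - t) atTop (nhds (B (γ 0))) := htend (γ 0)
    have h3 : ∀ᶠ t in atTop, dist (γ u) (γ t) - t = (dist (γ 0) (γ t) - t) - u := by
      filter_upwards [eventually_ge_atTop u, eventually_ge_atTop (0:ℝ)] with t htu ht0
      rw [hray u hu t (le_trans hu htu), hray 0 Set.self_mem_Ici t ht0]
      rw [abs_of_nonpos (by linarith), abs_of_nonpos (by linarith)]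
      ring
    have h4 : Tendsto (fun t => dist (γ u) (γ t) - t) atTop (nhds (B (γ 0) - u)) :=
      Tendsto.congr' (h3.mono fun t ht => ht.symm) (h2.sub tendsto_const_nhds)
    exact tendsto_nhds_unique h1 h4
  set D : ℝ → ℝ := fun t => dist x (γ t) with hD
  have hDbig : ∀ s : ℝ, ∀ᶠ t in atTop, s ≤ D t ∧ 0 ≤ t := by
    intro s
    filter_upwards [eventually_ge_atTop (max 0 (s + dist x (γ 0)))] with t ht
    have ht0 : (0:ℝ) ≤ t := le_trans (le_max_left _ _) ht
    have h1 : dist (γ 0) (γ t) = t := by rw [hray 0 Set.self_mem_Ici t ht0]; rw [abs_of_nonpos]; ring; linarith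
    have h2 : dist (γ 0) (γ t) ≤ dist (γ 0) x + dist x (γ t) := dist_triangle _ _ _
    have := le_trans (le_max_right 0 (s + dist x (γ 0))) ht
    constructor
    · have := dist_comm (γ 0) x; simp only [hD]; linarith
    · exact ht0
  set σ : ℝ → ℝ → X := fun t => Classical.choose (hgeo x (γ t)) with hσ
  have hσspec : ∀ t, IsGeodSegment (σ t) x (γ t) := fun t => Classical.choose_spec (hgeo x (γ t))
  set φ : ℝ → ℝ → X := fun s t => if 0 ≤ s ∧ s ≤ D t then σ t s else x with hφ
  have hφball : ∀ s, 0 ≤ s → ∀ t, φ s t ∈ closedBall x s := by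
    intro s hs t
    simp only [hφ]
    split_ifs with h
    · obtain ⟨g0, g1, gd⟩ := hσspec t
      have h2 := gd s ⟨h.1, h.2⟩ 0 ⟨le_rfl, dist_nonneg⟩
      rw [g0] at h2
      rw [mem_closedBall, h2, sub_zero, abs_of_nonneg hs]
    · simpa using hs
  set U : Ultrafilter ℝ := Ultrafilter.of atTop with hU
  have hUle : (U : Filter ℝ) ≤ atTop := Ultrafilter.of_le atTop
  have key : ∀ s : ℝ, 0 ≤ s → ∃ a, a ∈ closedBall x s ∧ Tendsto (φ s) (U : Filter ℝ) (nhds a) := by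
    intro s hs
    have hc : IsCompact (closedBall x s) := isCompact_closedBall x s
    have hle : (U.map (φ s) : Filter X) ≤ 𝓟 (closedBall x s) := by
      rw [le_principal_iff]
      exact mem_map.2 (Filter.univ_mem' (fun t => hφball s hs t))
    obtain ⟨a, ha, hla⟩ := hc.ultrafilter_le_nhds (U.map (φ s)) hle
    rw [Ultrafilter.coe_map] at hla
    exact ⟨a, ha, hla⟩
  set r : ℝ → X := fun s => if h : 0 ≤ s then (key s h).choose else x with hr
  have hrt : ∀ s (hs : 0 ≤ s), r s ∈ closedBall x s ∧ Tendsto (φ s) (U : Filter ℝ) (nhds (r s)) := by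
    intro s hs
    simp only [hr, dif_pos hs]
    exact (key s hs).choose_spec
  have hr0 : r 0 = x := by
    have := (hrt 0 le_rfl).1
    simpa using this
  have hφeq : ∀ s, 0 ≤ s → ∀ᶠ t in atTop, φ s t = σ t s := by
    intro s hs
    filter_upwards [hDbig s] with t ht
    exact if_pos ⟨hs, ht.1⟩
  refine ⟨r, hr0, ?_, ?_⟩
  · intro s hs t ht
    have h1 : Tendsto (fun n => dist (φ s n) (φ t n)) (U : Filter ℝ) (nhds (dist (r s) (r t))) :=
      ((hrt s hs).2).dist ((hrt t ht).2)
    have h2 : ∀ᶠ n in atTop, dist (φ s n) (φ t n) = |s - t| := by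
      filter_upwards [hDbig s, hDbig t, hφeq s hs, hφeq t ht] with n hns hnt hes het
      rw [hes, het]
      exact (hσspec n).2.2 s ⟨hs, hns.1⟩ t ⟨ht, hnt.1⟩
    have h3 : Tendsto (fun n => dist (φ s n) (φ t n)) (U : Filter ℝ) (nhds (|s - t|)) :=
      Tendsto.congr' ((h2.mono fun n hn => hn.symm).filter_mono hUle) tendsto_const_nhds
    exact tendsto_nhds_unique h1 h3
  · intro s hs
    have h1 : Tendsto (fun n => B (φ s n)) (U : Filter ℝ) (nhds (B (r s))) :=
      (hlip.continuous.tendsto _).comp ((hrt s hs).2)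
    have hup : ∀ᶠ n in atTop, B (φ s n) ≤ (D n - n) - s + B (γ 0) := by
      filter_upwards [hDbig s, hφeq s hs] with n hn he
      have hd : dist (φ s n) (γ n) = D n - s := by
        rw [he]
        obtain ⟨g0, g1, gd⟩ := hσspec n
        have := gd s ⟨hs, hn.1⟩ (D n) ⟨dist_nonneg, le_rfl⟩
        rw [g1] at this
        rw [this, abs_of_nonpos (by linarith [hn.1])]
        ring
      have := busemann_lip ⟨γ, hray, htend⟩ (φ s n) (γ n)
      rw [hd, hBγ n hn.2] at this
      linarith
    have hlo : ∀ᶠ n in atTop, B x - s ≤ B (φ s n) := by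
      filter_upwards [] with n
      have h := busemann_lip ⟨γ, hray, htend⟩ x (φ s n)
      have hb : dist x (φ s n) ≤ s := by
        have := hφball s hs n
        rw [mem_closedBall] at this
        rw [dist_comm]
        exact this
      linarith
    have hDn : Tendsto (fun n => (D n - n) - s + B (γ 0)) atTop (nhds (B x - s + B (γ 0))) := by
      exact Tendsto.add ((htend x).sub tendsto_const_nhds) tendsto_const_nhds
    have hγ0 : B (γ 0) = 0 := by
      have h1 : Tendsto (fun t => dist (γ 0) (γ t) - t) atTop (nhds (B (γ 0))) := htend (γ 0)
      have h2 : ∀ᶠ t in atTop, dist (γ 0) (γ t) - t = 0 := by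
        filter_upwards [eventually_ge_atTop (0:ℝ)] with t ht0
        rw [hray 0 Set.self_mem_Ici t ht0, abs_of_nonpos (by linarith)]
        ring
      exact tendsto_nhds_unique h1 (Tendsto.congr' (h2.mono fun t ht => ht.symm) tendsto_const_nhds)
    rw [hγ0, add_zero] at hDn
    have h4 : Tendsto (fun n => B (φ s n)) atTop (nhds (B x - s)) := by
      apply tendsto_of_tendsto_of_tendsto_of_le_of_le' tendsto_const_nhds ?_ hlo hup
      simpa [hγ0] using hDn
    exact tendsto_nhds_unique h1 (h4.mono_left hUle)

end

section helpers

theorem clamp_mem {lo hi : ℝ} (h : lo ≤ hi) (t : ℝ) :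
    min (max t lo) hi ∈ Set.Icc lo hi :=
  ⟨le_min (le_max_right _ _) h, min_le_right _ _⟩

theorem min_lip (a b c : ℝ) : |min a c - min b c| ≤ |a - b| := by
  rcases le_total a c with h1 | h1 <;> rcases le_total b c with h2 | h2
  · rw [min_eq_left h1, min_eq_left h2]
  · rw [min_eq_left h1, min_eq_right h2, abs_le]
    constructor
    · linarith [neg_abs_le (a - b)]
    · linarith [abs_nonneg (a - b)]
  · rw [min_eq_right h1, min_eq_left h2, abs_le]
    constructor
    · linarith [abs_nonneg (a - b)]
    · linarith [le_abs_self (a - b)]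
  · rw [min_eq_right h1, min_eq_right h2]
    simp [abs_nonneg]

theorem clamp_lip (lo hi s t : ℝ) :
    |min (max s lo) hi - min (max t lo) hi| ≤ |s - t| :=
  (min_lip _ _ hi).trans (abs_max_sub_max_le_abs s t lo)

theorem lip_glue {E : Type*} [PseudoMetricSpace E] {f g : ℝ → E} {m : ℝ}
    (hf : ∀ u w : ℝ, dist (f u) (f w) ≤ dist u w)
    (hg : ∀ u w : ℝ, dist (g u) (g w) ≤ dist u w)
    (hfg : f m = g m) :
    ∀ u w : ℝ, dist (if u ≤ m then f u else g u) (if w ≤ m then f w else g w) ≤ dist u w := by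
  have key : ∀ u w : ℝ, u ≤ m → ¬ w ≤ m → dist (f u) (g w) ≤ dist u w := by
    intro u w hu hw
    push_neg at hw
    have t1 : dist (f u) (g w) ≤ dist (f u) (f m) + dist (f m) (g w) := dist_triangle _ _ _
    have h2 := hf u m
    have h3 := hg m w
    rw [← hfg] at h3
    rw [Real.dist_eq] at h2 h3 ⊢
    rw [abs_of_nonpos (by linarith : u - m ≤ 0)] at h2
    rw [abs_of_nonpos (by linarith : m - w ≤ 0)] at h3
    rw [abs_of_nonpos (by linarith : u - w ≤ 0)]
    linarith
  intro u w
  split_ifs with hu hw hw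
  · exact hf u w
  · exact key u w hu hw
  · rw [dist_comm, dist_comm u w]
    exact key w u hw hu
  · exact hg u w

end helpers



/-- Lemma 7: Given two points `p, p'` in
`Y = {(x₁,x₂) : B₁(x₁) = B₂(x₂)}` (with the maximum metric `d_m`, which is the metric
induced from the product), there is a continuous path in `Y` from `p` to `p'` of length at
most `d_m(p,p') + 20δ`. -/
theorem stmt9 {X₁ X₂ : Type*} [MetricSpace X₁] [MetricSpace X₂]
    [ProperSpace X₁] [ProperSpace X₂]
    (hgeo₁ : GeodesicMS X₁) (hgeo₂ : GeodesicMS X₂)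
    (δ : ℝ) (hδ : 0 ≤ δ) (hhyp₁ : DeltaHyp X₁ δ) (hhyp₂ : DeltaHyp X₂ δ)
    (B₁ : X₁ → ℝ) (B₂ : X₂ → ℝ) (hB₁ : IsBusemann B₁) (hB₂ : IsBusemann B₂)
    (p p' : {q : X₁ × X₂ // B₁ q.1 = B₂ q.2}) :
    ∃ c : ℝ → {q : X₁ × X₂ // B₁ q.1 = B₂ q.2},
      ContinuousOn c (Set.Icc 0 1) ∧ c 0 = p ∧ c 1 = p' ∧
      eVariationOn c (Set.Icc (0 : ℝ) 1) ≤ ENNReal.ofReal (dist p p' + 20 * δ) := by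
  classical
  set x₁ := p.val.1 with hx₁
  set x₂ := p.val.2 with hx₂
  set y₁ := p'.val.1 with hy₁
  set y₂ := p'.val.2 with hy₂
  set a := B₁ x₁ with ha
  set b := B₁ y₁ with hb
  have ha2 : B₂ x₂ = a := p.prop.symm
  have hb2 : B₂ y₂ = b := p'.prop.symm
  set L₁ := dist x₁ y₁ with hL₁
  set L₂ := dist x₂ y₂ with hL₂
  set L := max L₁ L₂ with hLdef
  have hL1L : L₁ ≤ L := le_max_left _ _
  have hL2L : L₂ ≤ L := le_max_right _ _
  have hdistpp : dist p p' = L := by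
    rw [Subtype.dist_eq, Prod.dist_eq]
  have hab1 : a - b ≤ L := by
    have h1 := busemann_dist_le hB₁ x₁ y₁
    rw [← ha, ← hb, ← hL₁] at h1
    linarith [abs_le.1 h1|>.2, hL1L]
  have hab2 : b - a ≤ L := by
    have h1 := busemann_dist_le hB₁ x₁ y₁
    rw [← ha, ← hb, ← hL₁] at h1
    linarith [abs_le.1 h1|>.1, hL1L]
  set k := (a + b - L) / 2 with hk
  set v := k - 3 * δ with hv
  have hav : 0 ≤ a - v := by rw [hv, hk]; linarith
  have hbv : 0 ≤ b - v := by rw [hv, hk]; linarith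
  have hka : k ≤ a := by rw [hk]; linarith
  have hkb : k ≤ b := by rw [hk]; linarith
  -- the four B-rays
  obtain ⟨ρ, hρ0, hρray, hρB⟩ := busemann_ray hgeo₁ hB₁ x₁
  obtain ⟨ρ', hρ'0, hρ'ray, hρ'B⟩ := busemann_ray hgeo₁ hB₁ y₁
  obtain ⟨r, hr0, hrray, hrB⟩ := busemann_ray hgeo₂ hB₂ x₂
  obtain ⟨r', hr'0, hr'ray, hr'B⟩ := busemann_ray hgeo₂ hB₂ y₂
  rw [← ha] at hρB
  rw [ha2] at hrB
  rw [← hb] at hρ'B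
  rw [hb2] at hr'B
  set z₁ := ρ (a - v) with hz₁
  set z₁' := ρ' (b - v) with hz₁'
  set z₂ := r (a - v) with hz₂
  set z₂' := r' (b - v) with hz₂'
  have hBz₁ : B₁ z₁ = v := by rw [hz₁, hρB (a - v) (Set.mem_Ici.mpr hav)]; ring
  have hBz₁' : B₁ z₁' = v := by rw [hz₁', hρ'B (b - v) (Set.mem_Ici.mpr hbv)]; ring
  have hBz₂ : B₂ z₂ = v := by rw [hz₂, hrB (a - v) (Set.mem_Ici.mpr hav)]; ring
  have hBz₂' : B₂ z₂' = v := by rw [hz₂', hr'B (b - v) (Set.mem_Ici.mpr hbv)]; ring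
  have hxz₁ : dist x₁ z₁ = a - v := by
    rw [← hρ0, hz₁, ray_dist hρray le_rfl hav, zero_sub, abs_neg, abs_of_nonneg hav]
  have hyz₁' : dist y₁ z₁' = b - v := by
    rw [← hρ'0, hz₁', ray_dist hρ'ray le_rfl hbv, zero_sub, abs_neg, abs_of_nonneg hbv]
  have hxz₂ : dist x₂ z₂ = a - v := by
    rw [← hr0, hz₂, ray_dist hrray le_rfl hav, zero_sub, abs_neg, abs_of_nonneg hav]
  have hyz₂' : dist y₂ z₂' = b - v := by
    rw [← hr'0, hz₂', ray_dist hr'ray le_rfl hbv, zero_sub, abs_neg, abs_of_nonneg hbv]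
  -- bridges
  obtain ⟨β₁, hβ₁⟩ := hgeo₁ z₁ z₁'
  obtain ⟨β₂, hβ₂⟩ := hgeo₂ z₂ z₂'
  set ℓ₁ := dist z₁ z₁' with hl₁
  set ℓ₂ := dist z₂ z₂' with hl₂
  have hl₁0 : 0 ≤ ℓ₁ := hl₁ ▸ dist_nonneg
  have hl₂0 : 0 ≤ ℓ₂ := hl₂ ▸ dist_nonneg
  -- short bridges via the bridge lemma
  have hl₁6 : ℓ₁ ≤ 6 * δ := by
    have hvk : v ≤ (B₁ x₁ + B₁ y₁ - dist x₁ y₁) / 2 := by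
      rw [← ha, ← hb, ← hL₁, hv, hk]; linarith
    have hbr := bridge_lemma hgeo₁ hδ hhyp₁ hB₁ x₁ y₁ z₁ z₁' v hBz₁ hBz₁'
      (by rw [← ha]; exact hxz₁) (by rw [← hb]; exact hyz₁') hvk
    rcases hbr with h | ⟨h10, hkk⟩
    · exact hl₁ ▸ h
    · rw [← ha, ← hb, ← hL₁] at hkk
      have hδ0 : δ = 0 := by
        rw [hv, hk] at hkk
        have : L ≤ L₁ := by linarith
        linarith [hL1L, le_antisymm this hL1L, hδ]
      rw [hδ0] at h10 ⊢
      rw [← hl₁] at h10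
      linarith
  have hl₂6 : ℓ₂ ≤ 6 * δ := by
    have hvk : v ≤ (B₂ x₂ + B₂ y₂ - dist x₂ y₂) / 2 := by
      rw [ha2, hb2, ← hL₂, hv, hk]; linarith
    have hbr := bridge_lemma hgeo₂ hδ hhyp₂ hB₂ x₂ y₂ z₂ z₂' v hBz₂ hBz₂'
      (by rw [ha2]; exact hxz₂) (by rw [hb2]; exact hyz₂') hvk
    rcases hbr with h | ⟨h10, hkk⟩
    · exact hl₂ ▸ h
    · rw [ha2, hb2, ← hL₂] at hkk
      have hδ0 : δ = 0 := by
        rw [hv, hk] at hkk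
        have : L ≤ L₂ := by linarith
        linarith [hL2L, le_antisymm this hL2L, hδ]
      rw [hδ0] at h10 ⊢
      rw [← hl₂] at h10
      linarith
  -- Busemann bounds along the bridges
  have hβ₁B : ∀ u ∈ Set.Icc (0:ℝ) ℓ₁, B₁ (β₁ u) ≤ k := by
    intro u hu
    have h1 := geod_param hβ₁ hu
    have b1 := busemann_lip hB₁ (β₁ u) z₁
    have b2 := busemann_lip hB₁ (β₁ u) z₁'
    rw [hBz₁] at b1
    rw [hBz₁'] at b2
    have c1 : dist (β₁ u) z₁ = u := by rw [dist_comm]; exact h1.1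
    rw [c1] at b1
    rw [h1.2] at b2
    have hveq : v = k - 3 * δ := hv
    linarith [hl₁6]
  have hβ₂B : ∀ u ∈ Set.Icc (0:ℝ) ℓ₂, B₂ (β₂ u) ≤ k := by
    intro u hu
    have h1 := geod_param hβ₂ hu
    have b1 := busemann_lip hB₂ (β₂ u) z₂
    have b2 := busemann_lip hB₂ (β₂ u) z₂'
    rw [hBz₂] at b1
    rw [hBz₂'] at b2
    have c1 : dist (β₂ u) z₂ = u := by rw [dist_comm]; exact h1.1
    rw [c1] at b1
    rw [h1.2] at b2
    have hveq : v = k - 3 * δ := hv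
    linarith [hl₂6]
  -- breakpoints
  set T₁ := a - v with hT₁
  set T₂ := T₁ + ℓ₁ with hT₂
  set T₃ := T₂ + ℓ₂ with hT₃
  set T := T₃ + (b - v) with hT
  have hT₁0 : 0 ≤ T₁ := hav
  have hT₁₂ : T₁ ≤ T₂ := by rw [hT₂]; linarith
  have hT₂₃ : T₂ ≤ T₃ := by rw [hT₃]; linarith
  have hT₃T : T₃ ≤ T := by rw [hT]; linarith
  have hT0 : 0 ≤ T := by rw [hT, hT₃, hT₂]; linarith
  -- membership facts for the four pieces
  have memQ1 : ∀ t : ℝ, B₁ (ρ (min (max t 0) T₁)) = B₂ (r (min (max t 0) T₁)) := by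
    intro t
    have hm := clamp_mem hT₁0 t
    rw [hρB _ (Set.mem_Ici.mpr hm.1), hrB _ (Set.mem_Ici.mpr hm.1)]
  have memQ2 : ∀ t : ℝ,
      B₁ (β₁ (min (max (t - T₁) 0) ℓ₁)) =
        B₂ (r (a - B₁ (β₁ (min (max (t - T₁) 0) ℓ₁)))) := by
    intro t
    have hm := clamp_mem hl₁0 (t - T₁)
    have hle := hβ₁B _ hm
    have h0 : 0 ≤ a - B₁ (β₁ (min (max (t - T₁) 0) ℓ₁)) := by linarith
    rw [hrB _ (Set.mem_Ici.mpr h0)]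
    ring
  have memQ3 : ∀ t : ℝ,
      B₁ (ρ' (b - B₂ (β₂ (min (max (t - T₂) 0) ℓ₂)))) =
        B₂ (β₂ (min (max (t - T₂) 0) ℓ₂)) := by
    intro t
    have hm := clamp_mem hl₂0 (t - T₂)
    have hle := hβ₂B _ hm
    have h0 : 0 ≤ b - B₂ (β₂ (min (max (t - T₂) 0) ℓ₂)) := by linarith
    rw [hρ'B _ (Set.mem_Ici.mpr h0)]
    ring
  have memQ4 : ∀ t : ℝ,
      B₁ (ρ' (b - v - min (max (t - T₃) 0) (b - v))) =
        B₂ (r' (b - v - min (max (t - T₃) 0) (b - v))) := by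
    intro t
    have hm := clamp_mem hbv (t - T₃)
    have h0 : 0 ≤ b - v - min (max (t - T₃) 0) (b - v) := by linarith [hm.2]
    rw [hρ'B _ (Set.mem_Ici.mpr h0), hr'B _ (Set.mem_Ici.mpr h0)]
  -- the four pieces
  set Q1 : ℝ → {q : X₁ × X₂ // B₁ q.1 = B₂ q.2} :=
    fun t => ⟨(ρ (min (max t 0) T₁), r (min (max t 0) T₁)), memQ1 t⟩ with hQ1
  set Q2 : ℝ → {q : X₁ × X₂ // B₁ q.1 = B₂ q.2} :=
    fun t => ⟨(β₁ (min (max (t - T₁) 0) ℓ₁),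
      r (a - B₁ (β₁ (min (max (t - T₁) 0) ℓ₁)))), memQ2 t⟩ with hQ2
  set Q3 : ℝ → {q : X₁ × X₂ // B₁ q.1 = B₂ q.2} :=
    fun t => ⟨(ρ' (b - B₂ (β₂ (min (max (t - T₂) 0) ℓ₂))),
      β₂ (min (max (t - T₂) 0) ℓ₂)), memQ3 t⟩ with hQ3
  set Q4 : ℝ → {q : X₁ × X₂ // B₁ q.1 = B₂ q.2} :=
    fun t => ⟨(ρ' (b - v - min (max (t - T₃) 0) (b - v)),
      r' (b - v - min (max (t - T₃) 0) (b - v))), memQ4 t⟩ with hQ4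
  -- Lipschitz bounds for the pieces
  have hQ1lip : ∀ u w : ℝ, dist (Q1 u) (Q1 w) ≤ dist u w := by
    intro u w
    have hcu := clamp_mem hT₁0 u
    have hcw := clamp_mem hT₁0 w
    rw [hQ1]
    rw [Subtype.dist_eq, Prod.dist_eq]
    simp only
    rw [ray_dist hρray hcu.1 hcw.1, ray_dist hrray hcu.1 hcw.1, max_self, Real.dist_eq]
    exact clamp_lip 0 T₁ u w
  have hQ2lip : ∀ u w : ℝ, dist (Q2 u) (Q2 w) ≤ dist u w := by
    intro u w
    have hcu := clamp_mem hl₁0 (u - T₁)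
    have hcw := clamp_mem hl₁0 (w - T₁)
    have hlecl : |min (max (u - T₁) 0) ℓ₁ - min (max (w - T₁) 0) ℓ₁| ≤ |u - w| := by
      have h := clamp_lip 0 ℓ₁ (u - T₁) (w - T₁)
      have e : u - T₁ - (w - T₁) = u - w := by ring
      rwa [e] at h
    have hd1 : dist (β₁ (min (max (u - T₁) 0) ℓ₁)) (β₁ (min (max (w - T₁) 0) ℓ₁)) =
        |min (max (u - T₁) 0) ℓ₁ - min (max (w - T₁) 0) ℓ₁| := hβ₁.2.2 _ hcu _ hcw
    have hbu := hβ₁B _ hcu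
    have hbw := hβ₁B _ hcw
    have hd2 : dist (r (a - B₁ (β₁ (min (max (u - T₁) 0) ℓ₁))))
        (r (a - B₁ (β₁ (min (max (w - T₁) 0) ℓ₁)))) ≤
        |min (max (u - T₁) 0) ℓ₁ - min (max (w - T₁) 0) ℓ₁| := by
      rw [ray_dist hrray (by linarith) (by linarith)]
      have hB := busemann_dist_le hB₁ (β₁ (min (max (u - T₁) 0) ℓ₁))
        (β₁ (min (max (w - T₁) 0) ℓ₁))
      rw [hd1] at hB
      have e : a - B₁ (β₁ (min (max (u - T₁) 0) ℓ₁)) -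
          (a - B₁ (β₁ (min (max (w - T₁) 0) ℓ₁))) =
          -(B₁ (β₁ (min (max (u - T₁) 0) ℓ₁)) - B₁ (β₁ (min (max (w - T₁) 0) ℓ₁))) := by ring
      rw [e, abs_neg]
      exact hB
    rw [hQ2, Subtype.dist_eq, Prod.dist_eq]
    simp only
    rw [Real.dist_eq]
    apply max_le
    · rw [hd1]; exact hlecl
    · exact le_trans hd2 hlecl
  have hQ3lip : ∀ u w : ℝ, dist (Q3 u) (Q3 w) ≤ dist u w := by
    intro u w
    have hcu := clamp_mem hl₂0 (u - T₂)
    have hcw := clamp_mem hl₂0 (w - T₂)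
    have hlecl : |min (max (u - T₂) 0) ℓ₂ - min (max (w - T₂) 0) ℓ₂| ≤ |u - w| := by
      have h := clamp_lip 0 ℓ₂ (u - T₂) (w - T₂)
      have e : u - T₂ - (w - T₂) = u - w := by ring
      rwa [e] at h
    have hd1 : dist (β₂ (min (max (u - T₂) 0) ℓ₂)) (β₂ (min (max (w - T₂) 0) ℓ₂)) =
        |min (max (u - T₂) 0) ℓ₂ - min (max (w - T₂) 0) ℓ₂| := hβ₂.2.2 _ hcu _ hcw
    have hbu := hβ₂B _ hcu
    have hbw := hβ₂B _ hcw
    have hd2 : dist (ρ' (b - B₂ (β₂ (min (max (u - T₂) 0) ℓ₂))))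
        (ρ' (b - B₂ (β₂ (min (max (w - T₂) 0) ℓ₂)))) ≤
        |min (max (u - T₂) 0) ℓ₂ - min (max (w - T₂) 0) ℓ₂| := by
      rw [ray_dist hρ'ray (by linarith) (by linarith)]
      have hB := busemann_dist_le hB₂ (β₂ (min (max (u - T₂) 0) ℓ₂))
        (β₂ (min (max (w - T₂) 0) ℓ₂))
      rw [hd1] at hB
      have e : b - B₂ (β₂ (min (max (u - T₂) 0) ℓ₂)) -
          (b - B₂ (β₂ (min (max (w - T₂) 0) ℓ₂))) =
          -(B₂ (β₂ (min (max (u - T₂) 0) ℓ₂)) - B₂ (β₂ (min (max (w - T₂) 0) ℓ₂))) := by ring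
      rw [e, abs_neg]
      exact hB
    rw [hQ3, Subtype.dist_eq, Prod.dist_eq]
    simp only
    rw [Real.dist_eq]
    apply max_le
    · exact le_trans hd2 hlecl
    · rw [hd1]; exact hlecl
  have hQ4lip : ∀ u w : ℝ, dist (Q4 u) (Q4 w) ≤ dist u w := by
    intro u w
    have hcu := clamp_mem hbv (u - T₃)
    have hcw := clamp_mem hbv (w - T₃)
    have hlecl : |min (max (u - T₃) 0) (b - v) - min (max (w - T₃) 0) (b - v)| ≤ |u - w| := by
      have h := clamp_lip 0 (b - v) (u - T₃) (w - T₃)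
      have e : u - T₃ - (w - T₃) = u - w := by ring
      rwa [e] at h
    have h0u : 0 ≤ b - v - min (max (u - T₃) 0) (b - v) := by linarith [hcu.2]
    have h0w : 0 ≤ b - v - min (max (w - T₃) 0) (b - v) := by linarith [hcw.2]
    have e : b - v - min (max (u - T₃) 0) (b - v) - (b - v - min (max (w - T₃) 0) (b - v)) =
        -(min (max (u - T₃) 0) (b - v) - min (max (w - T₃) 0) (b - v)) := by ring
    rw [hQ4, Subtype.dist_eq, Prod.dist_eq]
    simp only
    rw [Real.dist_eq, ray_dist hρ'ray h0u h0w, ray_dist hr'ray h0u h0w, max_self, e, abs_neg]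
    exact hlecl
  -- gluing equalities
  have hβ₁0 : β₁ 0 = z₁ := hβ₁.1
  have hβ₁1 : β₁ ℓ₁ = z₁' := hβ₁.2.1
  have hβ₂0 : β₂ 0 = z₂ := hβ₂.1
  have hβ₂1 : β₂ ℓ₂ = z₂' := hβ₂.2.1
  have eq12 : Q1 T₁ = Q2 T₁ := by
    rw [hQ1, hQ2]
    apply Subtype.ext
    simp only
    have e1 : min (max T₁ 0) T₁ = T₁ := by rw [max_eq_left hT₁0, min_self]
    have e2 : min (max (T₁ - T₁) 0) ℓ₁ = 0 := by
      rw [sub_self, max_self, min_eq_left hl₁0]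
    rw [e1, e2, hβ₁0, hBz₁]
  have eq23 : Q2 T₂ = Q3 T₂ := by
    rw [hQ2, hQ3]
    apply Subtype.ext
    simp only
    have e1 : min (max (T₂ - T₁) 0) ℓ₁ = ℓ₁ := by
      have : T₂ - T₁ = ℓ₁ := by rw [hT₂]; ring
      rw [this, max_eq_left hl₁0, min_self]
    have e2 : min (max (T₂ - T₂) 0) ℓ₂ = 0 := by
      rw [sub_self, max_self, min_eq_left hl₂0]
    rw [e1, e2, hβ₁1, hBz₁', hβ₂0, hBz₂]
  have eq34 : Q3 T₃ = Q4 T₃ := by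
    rw [hQ3, hQ4]
    apply Subtype.ext
    simp only
    have e1 : min (max (T₃ - T₂) 0) ℓ₂ = ℓ₂ := by
      have : T₃ - T₂ = ℓ₂ := by rw [hT₃]; ring
      rw [this, max_eq_left hl₂0, min_self]
    have e2 : min (max (T₃ - T₃) 0) (b - v) = 0 := by
      rw [sub_self, max_self, min_eq_left hbv]
    rw [e1, e2, hβ₂1, hBz₂', sub_zero]
  -- the glued path
  set cbar : ℝ → {q : X₁ × X₂ // B₁ q.1 = B₂ q.2} :=
    fun t => if t ≤ T₁ then Q1 t else if t ≤ T₂ then Q2 t else if t ≤ T₃ then Q3 t else Q4 t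
    with hcbar
  have hcbarlip : ∀ u w : ℝ, dist (cbar u) (cbar w) ≤ dist u w := by
    have h34 := lip_glue (m := T₃) hQ3lip hQ4lip eq34
    have h234 := lip_glue (m := T₂) hQ2lip h34 (by rw [if_pos hT₂₃]; exact eq23)
    have h1234 := lip_glue (m := T₁) hQ1lip h234 (by rw [if_pos hT₁₂]; exact eq12)
    intro u w
    exact h1234 u w
  have hc0 : cbar 0 = p := by
    rw [hcbar]
    simp only
    rw [if_pos hT₁0, hQ1]
    apply Subtype.ext
    simp only
    rw [max_self, min_eq_left hT₁0, hρ0, hr0, hx₁, hx₂]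
  have hcT : cbar T = p' := by
    rw [hcbar]
    simp only
    by_cases h1 : T ≤ T₁
    · have hz : ℓ₁ = 0 ∧ ℓ₂ = 0 ∧ b - v = 0 := by
        rw [hT, hT₃, hT₂] at h1
        exact ⟨by linarith, by linarith, by linarith⟩
      have hTT₁ : T = T₁ := by rw [hT, hT₃, hT₂, hz.1, hz.2.1, hz.2.2]; ring
      rw [if_pos h1, hQ1]
      apply Subtype.ext
      simp only
      have e1 : min (max T 0) T₁ = T₁ := by rw [hTT₁, max_eq_left hT₁0, min_self]
      have hz₁z₁' : z₁ = z₁' := by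
        have : dist z₁ z₁' = 0 := by rw [← hl₁]; exact hz.1
        exact dist_eq_zero.1 this
      have hz₂z₂' : z₂ = z₂' := by
        have : dist z₂ z₂' = 0 := by rw [← hl₂]; exact hz.2.1
        exact dist_eq_zero.1 this
      have hby : z₁' = y₁ := by rw [hz₁', hz.2.2, hρ'0]
      have hby2 : z₂' = y₂ := by rw [hz₂', hz.2.2, hr'0]
      rw [e1, hT₁]
      rw [← hz₁, ← hz₂, hz₁z₁', hz₂z₂', hby, hby2, hy₁, hy₂]
    · rw [if_neg h1]
      by_cases h2 : T ≤ T₂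
      · have hz : ℓ₂ = 0 ∧ b - v = 0 := by
          rw [hT, hT₃] at h2
          exact ⟨by linarith, by linarith⟩
        have hTT₂ : T = T₂ := by rw [hT, hT₃, hz.1, hz.2]; ring
        rw [if_pos h2, hQ2]
        apply Subtype.ext
        simp only
        have e1 : min (max (T - T₁) 0) ℓ₁ = ℓ₁ := by
          have : T - T₁ = ℓ₁ := by rw [hTT₂, hT₂]; ring
          rw [this, max_eq_left hl₁0, min_self]
        have hz₂z₂' : z₂ = z₂' := by
          have : dist z₂ z₂' = 0 := by rw [← hl₂]; exact hz.1
          exact dist_eq_zero.1 this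
        have hby : z₁' = y₁ := by rw [hz₁', hz.2, hρ'0]
        have hby2 : z₂' = y₂ := by rw [hz₂', hz.2, hr'0]
        rw [e1, hβ₁1, hBz₁']
        rw [show a - v = a - v from rfl]
        rw [← hz₂, hz₂z₂', hby, hby2, hy₁, hy₂]
      · rw [if_neg h2]
        by_cases h3 : T ≤ T₃
        · have hz : b - v = 0 := by
            rw [hT] at h3
            linarith
          have hTT₃ : T = T₃ := by rw [hT, hz]; ring
          rw [if_pos h3, hQ3]
          apply Subtype.ext
          simp only
          have e1 : min (max (T - T₂) 0) ℓ₂ = ℓ₂ := by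
            have : T - T₂ = ℓ₂ := by rw [hTT₃, hT₃]; ring
            rw [this, max_eq_left hl₂0, min_self]
          have hby : z₁' = y₁ := by rw [hz₁', hz, hρ'0]
          have hby2 : z₂' = y₂ := by rw [hz₂', hz, hr'0]
          rw [e1, hβ₂1, hBz₂']
          rw [show b - v = 0 from hz, ← hz, ← hz₁']
          rw [hby, hby2, hy₁, hy₂]
        · rw [if_neg h3, hQ4]
          apply Subtype.ext
          simp only
          have e1 : min (max (T - T₃) 0) (b - v) = b - v := by
            have : T - T₃ = b - v := by rw [hT]; ring
            rw [this, max_eq_left hbv, min_self]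
          rw [e1, sub_self, hρ'0, hr'0, hy₁, hy₂]
  -- conclude
  have hTbound : T ≤ dist p p' + 20 * δ := by
    rw [hdistpp, hT, hT₃, hT₂, hT₁, hv, hk]
    linarith [hl₁6, hl₂6]
  refine ⟨fun t => cbar (T * t), ?_, ?_, ?_, ?_⟩
  · have hcont : Continuous cbar := by
      apply LipschitzWith.continuous (K := 1)
      apply LipschitzWith.of_dist_le_mul
      intro u w
      rw [NNReal.coe_one, one_mul]
      exact hcbarlip u w
    exact (hcont.comp (continuous_const.mul continuous_id)).continuousOn
  · show cbar (T * 0) = p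
    rw [mul_zero]
    exact hc0
  · show cbar (T * 1) = p'
    rw [mul_one]
    exact hcT
  · have hlip1 : LipschitzWith 1 cbar := LipschitzWith.of_dist_le_mul (fun u w => by
      rw [NNReal.coe_one, one_mul]; exact hcbarlip u w)
    have hmono : MonotoneOn (fun t : ℝ => T * t) (Set.Icc (0:ℝ) 1) := by
      intro s _ t _ hst
      exact mul_le_mul_of_nonneg_left hst hT0
    have h1 : eVariationOn (fun t : ℝ => T * t) (Set.Icc (0:ℝ) 1 ∩ Set.Icc (0:ℝ) 1)
        ≤ ENNReal.ofReal (T * 1 - T * 0) :=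
      hmono.eVariationOn_le (Set.left_mem_Icc.mpr zero_le_one)
        (Set.right_mem_Icc.mpr zero_le_one)
    rw [Set.inter_self] at h1
    have h2 := LipschitzOnWith.comp_eVariationOn_le (hlip1.lipschitzOnWith (s := Set.univ))
      (Set.mapsTo_univ (fun t : ℝ => T * t) (Set.Icc (0:ℝ) 1))
    calc eVariationOn (fun t => cbar (T * t)) (Set.Icc (0:ℝ) 1)
        = eVariationOn (cbar ∘ fun t : ℝ => T * t) (Set.Icc (0:ℝ) 1) := rfl
      _ ≤ (1:ℝ≥0) * eVariationOn (fun t : ℝ => T * t) (Set.Icc (0:ℝ) 1) := h2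
      _ ≤ (1:ℝ≥0) * ENNReal.ofReal (T * 1 - T * 0) := mul_le_mul_right h1 _
      _ = ENNReal.ofReal (T * 1 - T * 0) := by rw [ENNReal.coe_one, one_mul]
      _ ≤ ENNReal.ofReal (dist p p' + 20 * δ) := by
          apply ENNReal.ofReal_le_ofReal
          rw [mul_one, mul_zero, sub_zero]
          exact hTbound
end
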